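/- arXiv:1207.6880 — 5 statements merged into one kernel-verified Lean document; each statement's English description precedes it below -/
import Mathlib

section
/- Under Assumption A1, the mean field h(θ) = ∫_X H(x,θ) π_θ(x) λ(dx) is continuous on Θ and is given explicitly by h(θ) = (Σ_{i=1}^d θ⋆(i)/θ(i))^{-1} (θ⋆ − θ) for every θ ∈ Θ. -/
open MeasureTheory ProbabilityTheory Filter Set Asymptotics
open scoped ENNReal NNReal Topology ENat

noncomputable section

/-- The weight `θ⋆(i) = ∫_{X_i} π dλ` of the stratum `X_i = idx⁻¹{i}`. -/
def thetaStarW {E : Type*} [MeasurableSpace E] (lam : Measure E) (pdf : E → ℝ)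
    {d : ℕ} (idx : E → Fin d) (i : Fin d) : ℝ :=
  ∫ x in idx ⁻¹' {i}, pdf x ∂lam

/-- The open simplex `Θ` of non-degenerate probability vectors on `{1,…,d}`. -/
def simplexInt (d : ℕ) : Set (Fin d → ℝ) :=
  {t | (∀ i, 0 < t i ∧ t i < 1) ∧ ∑ i, t i = 1}

/-- The biased density `π_θ(x) = (∑ᵢ θ⋆(i)/θ(i))⁻¹ ∑ᵢ (π(x)/θ(i)) 1_{X_i}(x)`. -/
def piB {E : Type*} [MeasurableSpace E] (lam : Measure E) (pdf : E → ℝ)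
    {d : ℕ} (idx : E → Fin d) (t : Fin d → ℝ) (x : E) : ℝ :=
  (∑ i, thetaStarW lam pdf idx i / t i)⁻¹ *
    ∑ i, (pdf x / t i) * (if idx x = i then 1 else 0)

/-- `P` is the symmetric Metropolis-Hastings kernel with proposal density `q`
and target density `pB` with respect to `lam`:
`P(x,dy) = q(x,y) α(x,y) λ(dy) + δ_x(dy) (1 - ∫ q(x,z) α(x,z) λ(dz))`
where `α(x,y) = 1 ∧ (pB(y)/pB(x))`. -/
def IsMHKernel {E : Type*} [MeasurableSpace E] (lam : Measure E) (q : E → E → ℝ)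
    (pB : E → ℝ) (P : Kernel E E) : Prop :=
  ∀ x : E, P x =
    lam.withDensity (fun y => ENNReal.ofReal (q x y * min 1 (pB y / pB x)))
      + (ENNReal.ofReal (1 - ∫ z, q x z * min 1 (pB z / pB x) ∂lam)) • Measure.dirac x

/-- The σ-algebra `F_n = σ(θ₀, X₀, …, X_n)`. -/
def wlSigma {E Ω : Type*} [MeasurableSpace E] {d : ℕ}
    (X : ℕ → Ω → E) (θ : ℕ → Ω → Fin d → ℝ) (n : ℕ) : MeasurableSpace Ω :=
  MeasurableSpace.comap (θ 0) MeasurableSpace.pi ⊔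
    ⨆ k ≤ n, MeasurableSpace.comap (X k) ‹MeasurableSpace E›

/-- The field `H_i(x,θ) = θ(i) (1_{X_i}(x) - θ(I(x)))`. -/
def Hfield {E : Type*} {d : ℕ} (idx : E → Fin d) (x : E) (t : Fin d → ℝ) (i : Fin d) : ℝ :=
  t i * ((if idx x = i then 1 else 0) - t (idx x))

/-- The mean field `h(θ) = ∫ H(x,θ) π_θ(x) λ(dx)`. -/
def meanField {E : Type*} [MeasurableSpace E] (lam : Measure E) (pdf : E → ℝ)
    {d : ℕ} (idx : E → Fin d) (t : Fin d → ℝ) : Fin d → ℝ :=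
  fun i => ∫ x, Hfield idx x t i * piB lam pdf idx t x ∂lam

/-- `i` is the smallest index of a stratum of smallest weight, `i = I_n`. -/
def isLeastMin {d : ℕ} (v : Fin d → ℝ) (i : Fin d) : Prop :=
  (∀ j, v i ≤ v j) ∧ ∀ i', (∀ j, v i' ≤ v j) → i ≤ i'

/-- The successive return times `T_k` of the chain to the stratum of smallest
weight: `T_0 = 0`, `T_k = inf {n > T_{k-1} : X_n ∈ X_{I_n}}` (`= ∞` if empty). -/
def retTime {E Ω : Type*} {d : ℕ} (idx : E → Fin d)
    (X : ℕ → Ω → E) (θ : ℕ → Ω → Fin d → ℝ) : ℕ → Ω → ℕ∞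
  | 0 => fun _ => 0
  | (k+1) => fun ω => sInf {m : ℕ∞ | ∃ n : ℕ, m = (n : ℕ∞) ∧
      retTime idx X θ k ω < (n : ℕ∞) ∧ isLeastMin (θ n ω) (idx (X n ω))}

/-- The (0-based) largest index `i_m - 1` such that the `i_m` smallest weights of `w`
are `< (min_j w(j)) (1+γ₁)/(1-γ₁)`; the increasing reordering `(1)_m, …, (d)_m`
of the weights is realised through the sorting permutation `Tuple.sort w`. -/
def imax0 {d : ℕ} (γ1 : ℝ) (w : Fin d → ℝ) : ℕ :=
  sSup {j : ℕ | ∃ h : j < d, w (Tuple.sort w ⟨j, h⟩) < (⨅ i, w i) * (1 + γ1) / (1 - γ1)}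

/-- The event `A_m = {X_{s+md+1} ∈ X_{(i_m)_m}, X_{s+md+2} ∈ X_{(i_m-1)_m}, …,
X_{s+md+i_m} ∈ X_{(1)_m}}`, where `s = T_k` and `(j)_m` is the increasing
reordering of the weights at time `s + md`. -/
def eventA {E Ω : Type*} {d : ℕ} (idx : E → Fin d) (X : ℕ → Ω → E)
    (θ : ℕ → Ω → Fin d → ℝ) (γ1 : ℝ) (s : Ω → ℕ) (m : ℕ) : Set Ω :=
  {ω | ∀ t : ℕ, t ≤ imax0 γ1 (θ (s ω + m * d) ω) →
    ∀ h : imax0 γ1 (θ (s ω + m * d) ω) - t < d,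
    idx (X (s ω + m * d + 1 + t) ω) =
      Tuple.sort (θ (s ω + m * d) ω) ⟨imax0 γ1 (θ (s ω + m * d) ω) - t, h⟩}

/-- Iterates `P^n` of a Markov kernel. -/
def kIter {E : Type*} [MeasurableSpace E] (κ : Kernel E E) : ℕ → Kernel E E
  | 0 => Kernel.id
  | (n+1) => κ ∘ₖ kIter κ n

/-- The Poisson solution `Ĥ_θ⋆ = ∑_{n≥0} P_θ⋆ⁿ (H(·,θ⋆) - h(θ⋆))`. -/
def poissonH {E : Type*} [MeasurableSpace E] (lam : Measure E) (pdf : E → ℝ)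
    {d : ℕ} (idx : E → Fin d) (P : (Fin d → ℝ) → Kernel E E) (x : E) (i : Fin d) : ℝ :=
  ∑' n : ℕ, ∫ y, (Hfield idx y (thetaStarW lam pdf idx) i
      - meanField lam pdf idx (thetaStarW lam pdf idx) i)
    ∂(kIter (P (thetaStarW lam pdf idx)) n x)

/-- The asymptotic variance-covariance matrix `U⋆`. -/
def Ustar {E : Type*} [MeasurableSpace E] (lam : Measure E) (pdf : E → ℝ)
    {d : ℕ} (idx : E → Fin d) (P : (Fin d → ℝ) → Kernel E E) (i j : Fin d) : ℝ :=
  ∫ x, (poissonH lam pdf idx P x i * poissonH lam pdf idx P x j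
      - (∫ y, poissonH lam pdf idx P y i ∂(P (thetaStarW lam pdf idx) x)) *
        (∫ y, poissonH lam pdf idx P y j ∂(P (thetaStarW lam pdf idx) x)))
    * piB lam pdf idx (thetaStarW lam pdf idx) x ∂lam

/-- Convergence in distribution of real random variables, expressed through
expectations of bounded continuous functions. -/
def CvgInDist {Ω : Type*} [MeasurableSpace Ω] (Pr : Measure Ω)
    (Z : ℕ → Ω → ℝ) (ν : Measure ℝ) : Prop :=
  ∀ g : ℝ → ℝ, Continuous g → (∃ C, ∀ x, |g x| ≤ C) →
    Tendsto (fun n => ∫ ω, g (Z n ω) ∂Pr) atTop (𝓝 (∫ x, g x ∂ν))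


theorem wang_landau_mean_field
    {E : Type*} [MeasurableSpace E] [TopologicalSpace E] [PolishSpace E] [BorelSpace E]
    [Nonempty E]
    (d : ℕ) (hd : 2 ≤ d)
    (lam : Measure E) (pdf : E → ℝ) (idx : E → Fin d)
    (q : E → E → ℝ) (P : (Fin d → ℝ) → Kernel E E)
    -- (A1): `0 < inf π ≤ sup π < ∞` and `min_i θ⋆(i) > 0`, π a probability density
    (hpdf_meas : Measurable pdf)
    (hpdf_prob : ∫ x, pdf x ∂lam = 1)
    (hpdf_inf : 0 < ⨅ x, pdf x)
    (hpdf_sup : BddAbove (Set.range pdf))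
    (hidx_meas : Measurable idx)
    (hts_pos : ∀ i, 0 < thetaStarW lam pdf idx i) :
    ContinuousOn (meanField lam pdf idx) (simplexInt d) ∧
    ∀ t ∈ simplexInt d, meanField lam pdf idx t =
      fun i => (∑ j, thetaStarW lam pdf idx j / t j)⁻¹ * (thetaStarW lam pdf idx i - t i) := by
  have hint : Integrable pdf lam := by
    by_contra h
    rw [integral_undef h] at hpdf_prob
    norm_num at hpdf_prob
  set ts := thetaStarW lam pdf idx with hts
  have hmeasj : ∀ j : Fin d, MeasurableSet (idx ⁻¹' {j}) :=
    fun j => hidx_meas (measurableSet_singleton j)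
  have hsum : ∑ j, ts j = 1 := by
    have h1 : ∀ j : Fin d, ts j = ∫ x, (idx ⁻¹' {j}).indicator pdf x ∂lam := by
      intro j; rw [integral_indicator (hmeasj j)]; rfl
    simp_rw [h1]
    rw [← integral_finset_sum _ (fun j _ => hint.indicator (hmeasj j)), ← hpdf_prob]
    congr 1; funext x
    have h2 : ∀ j : Fin d, (idx ⁻¹' {j}).indicator pdf x
        = if idx x = j then pdf x else 0 := by
      intro j
      by_cases h : idx x = j
      · rw [if_pos h]; exact Set.indicator_of_mem (by simp [h]) pdf
      · rw [if_neg h]; exact Set.indicator_of_notMem (by simp [h]) pdf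
    simp [h2]
  have key : ∀ t ∈ simplexInt d, meanField lam pdf idx t =
      fun i => (∑ j, ts j / t j)⁻¹ * (ts i - t i) := by
    intro t ht
    obtain ⟨htpos, htsum⟩ := ht
    have htne : ∀ j, t j ≠ 0 := fun j => (htpos j).1.ne'
    funext i
    set C : ℝ := (∑ j, ts j / t j)⁻¹ with hC
    have hpt : ∀ x, Hfield idx x t i * piB lam pdf idx t x
        = ∑ j, (idx ⁻¹' {j}).indicator
            (fun y => (C * (t i * ((if j = i then (1:ℝ) else 0) - t j) / t j)) * pdf y) x := by
      intro x
      have hinner : ∑ k, (pdf x / t k) * (if idx x = k then (1:ℝ) else 0)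
          = pdf x / t (idx x) := by
        simp [mul_ite, Finset.sum_ite_eq]
      have hind : ∀ j : Fin d, (idx ⁻¹' {j}).indicator
            (fun y => (C * (t i * ((if j = i then (1:ℝ) else 0) - t j) / t j)) * pdf y) x
          = if idx x = j then
              (C * (t i * ((if j = i then (1:ℝ) else 0) - t j) / t j)) * pdf x else 0 := by
        intro j
        by_cases h : idx x = j
        · rw [if_pos h]; exact Set.indicator_of_mem (by simp [h]) _
        · rw [if_neg h]; exact Set.indicator_of_notMem (by simp [h]) _
      simp only [hind, Finset.sum_ite_eq, Finset.mem_univ, if_true]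
      unfold Hfield piB
      rw [hinner, ← hts, ← hC]
      ring
    unfold meanField
    simp_rw [hpt]
    rw [integral_finset_sum _ (fun j _ => (hint.const_mul _).indicator (hmeasj j))]
    have hterm : ∀ j : Fin d, (∫ x, (idx ⁻¹' {j}).indicator
          (fun y => (C * (t i * ((if j = i then (1:ℝ) else 0) - t j) / t j)) * pdf y) x ∂lam)
        = C * ((if j = i then t i * ts j / t j else 0) - t i * ts j) := by
      intro j
      rw [integral_indicator (hmeasj j), integral_const_mul]
      have hI : (∫ x in idx ⁻¹' {j}, pdf x ∂lam) = ts j := rfl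
      rw [hI]
      by_cases h : j = i
      · subst h
        simp only [if_pos rfl]
        rw [mul_div_cancel_left₀ _ (htne j)]
        rw [mul_div_cancel_left₀ _ (htne j)]
        simp only [if_true]
        ring
      · simp only [if_neg h, zero_sub, mul_neg, neg_div,
          mul_div_cancel_right₀ _ (htne j)]
        ring
    simp_rw [hterm]
    rw [← Finset.mul_sum]
    congr 1
    rw [Finset.sum_sub_distrib,
      Finset.sum_ite_eq' Finset.univ i (fun j => t i * ts j / t j)]
    simp only [Finset.mem_univ, if_true]
    rw [← Finset.mul_sum, hsum, mul_one, mul_div_cancel_left₀ _ (htne i)]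
  refine ⟨?_, key⟩
  have hCcont : ContinuousOn (fun t : Fin d → ℝ => (∑ j, ts j / t j)⁻¹) (simplexInt d) := by
    apply ContinuousOn.inv₀
    · exact continuousOn_finset_sum _
        (fun j _ => continuousOn_const.div (continuous_apply j).continuousOn
          (fun t ht => (ht.1 j).1.ne'))
    · intro t ht
      have hpos : 0 < ∑ j, ts j / t j :=
        Finset.sum_pos (fun j _ => div_pos (hts_pos j) (ht.1 j).1)
          ⟨⟨0, by omega⟩, Finset.mem_univ _⟩
      exact hpos.ne'
  have hcont : ContinuousOn
      (fun t : Fin d → ℝ => fun i => (∑ j, ts j / t j)⁻¹ * (ts i - t i)) (simplexInt d) := by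
    apply continuousOn_pi.mpr
    intro i
    exact hCcont.mul (continuousOn_const.sub (continuous_apply i).continuousOn)
  exact hcont.congr key

end
end

section
/- Under Assumption A1, V is a Lyapunov function for the mean field h: for every θ ∈ Θ, ⟨∇V(θ), h(θ)⟩ = −(Σ_{i=1}^d θ⋆(i)/θ(i))^{-1} Σ_{i=1}^d (θ⋆(i) − θ(i))²/θ(i) ≤ 0, and ⟨∇V(θ), h(θ)⟩ = 0 if and only if θ = θ⋆. -/
open MeasureTheory ProbabilityTheory Filter Set Asymptotics
open scoped ENNReal NNReal Topology ENat

noncomputable section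

/-! The gradient of `V` at `θ` is `(-θ⋆(i)/θ(i))ᵢ`, so
`⟨∇V(θ), θ⋆ - θ⟩ = -∑ᵢ θ⋆(i)(θ⋆(i) - θ(i))/θ(i)`. Subtracting `∑ᵢ (θ⋆(i) - θ(i)) = 0` turns this
into minus the chi-square distance `∑ᵢ (θ⋆(i) - θ(i))²/θ(i)`, which is nonnegative and vanishes
only at `θ = θ⋆`; the positive factor `(∑ᵢ θ⋆(i)/θ(i))⁻¹` changes neither fact. -/

open Finset

theorem hasDerivAt_mul_log_div (a : ℝ) {x : ℝ} (hx : x ≠ 0) :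
    HasDerivAt (fun y => a * Real.log (a / y)) (-(a / x)) x := by
  rcases eq_or_ne a 0 with rfl | ha
  · simpa using hasDerivAt_const x (0 : ℝ)
  have hdiv : HasDerivAt (fun y => a / y) (a * -(x ^ 2)⁻¹) x := by
    simpa only [div_eq_mul_inv] using (hasDerivAt_inv hx).const_mul a
  refine ((hdiv.log (div_ne_zero ha hx)).const_mul a).congr_deriv ?_
  field_simp

theorem hasFDerivAt_sum_mul_log_div {ι : Type*} [Fintype ι] (a t : ι → ℝ) (ht : ∀ i, t i ≠ 0) :
    HasFDerivAt (fun t' : ι → ℝ => ∑ i, a i * Real.log (a i / t' i))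
      (∑ i, (-(a i / t i)) • ContinuousLinearMap.proj (R := ℝ) (φ := fun _ : ι => ℝ) i) t :=
  HasFDerivAt.fun_sum fun i _ =>
    (hasDerivAt_mul_log_div (a i) (ht i)).comp_hasFDerivAt (f := fun t' : ι → ℝ => t' i) t
      (hasFDerivAt_apply i t)

theorem fderiv_sum_mul_log_div_apply {ι : Type*} [Fintype ι] (a t v : ι → ℝ)
    (ht : ∀ i, t i ≠ 0) :
    fderiv ℝ (fun t' : ι → ℝ => ∑ i, a i * Real.log (a i / t' i)) t v
      = -∑ i, a i / t i * v i := by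
  simp [(hasFDerivAt_sum_mul_log_div a t ht).fderiv]

theorem sum_div_mul_sub_eq_sum_sq_div {ι : Type*} [Fintype ι] {a t : ι → ℝ}
    (ht : ∀ i, t i ≠ 0) (hsum : ∑ i, a i = ∑ i, t i) :
    ∑ i, a i / t i * (a i - t i) = ∑ i, (a i - t i) ^ 2 / t i := by
  have hzero : ∑ i, (a i - t i) = 0 := by rw [sum_sub_distrib, hsum, sub_self]
  have hterm : ∀ i, a i / t i * (a i - t i) = (a i - t i) ^ 2 / t i + (a i - t i) := fun i => by
    field_simp [ht i]
    ring
  simp only [hterm, sum_add_distrib, hzero, add_zero]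

theorem sum_sq_div_nonneg {ι : Type*} [Fintype ι] (a : ι → ℝ) {t : ι → ℝ}
    (ht : ∀ i, 0 < t i) : 0 ≤ ∑ i, (a i - t i) ^ 2 / t i :=
  sum_nonneg fun i _ => div_nonneg (sq_nonneg _) (ht i).le

theorem sum_sq_div_eq_zero_iff {ι : Type*} [Fintype ι] {a t : ι → ℝ} (ht : ∀ i, 0 < t i) :
    ∑ i, (a i - t i) ^ 2 / t i = 0 ↔ a = t := by
  rw [sum_eq_zero_iff_of_nonneg fun i _ => div_nonneg (sq_nonneg _) (ht i).le, funext_iff]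
  simp [(ht _).ne', sub_eq_zero]

theorem wang_landau_lyapunov_derivative_general
    (d : ℕ)
    (ts : Fin d → ℝ) (hts_pos : ∀ i, 0 < ts i) (hts_sum : ∑ i, ts i = 1) :
    ∀ t ∈ simplexInt d,
      fderiv ℝ (fun t' : Fin d → ℝ => ∑ i, ts i * Real.log (ts i / t' i)) t
          (fun i => (∑ j, ts j / t j)⁻¹ * (ts i - t i))
        = - (∑ j, ts j / t j)⁻¹ * ∑ i, (ts i - t i) ^ 2 / t i ∧
      fderiv ℝ (fun t' : Fin d → ℝ => ∑ i, ts i * Real.log (ts i / t' i)) t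
          (fun i => (∑ j, ts j / t j)⁻¹ * (ts i - t i)) ≤ 0 ∧
      (fderiv ℝ (fun t' : Fin d → ℝ => ∑ i, ts i * Real.log (ts i / t' i)) t
          (fun i => (∑ j, ts j / t j)⁻¹ * (ts i - t i)) = 0 ↔ t = ts) := by
  rintro t ⟨ht_mem, ht_sum⟩
  have ht_pos : ∀ i, 0 < t i := fun i => (ht_mem i).1
  have hne : (univ : Finset (Fin d)).Nonempty :=
    nonempty_of_sum_ne_zero (by rw [hts_sum]; exact one_ne_zero)
  have hc : 0 < (∑ j, ts j / t j)⁻¹ :=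
    inv_pos.mpr (sum_pos (fun j _ => div_pos (hts_pos j) (ht_pos j)) hne)
  have hval : fderiv ℝ (fun t' : Fin d → ℝ => ∑ i, ts i * Real.log (ts i / t' i)) t
      (fun i => (∑ j, ts j / t j)⁻¹ * (ts i - t i))
        = -(∑ j, ts j / t j)⁻¹ * ∑ i, (ts i - t i) ^ 2 / t i := by
    rw [fderiv_sum_mul_log_div_apply _ _ _ fun i => (ht_pos i).ne',
      ← sum_div_mul_sub_eq_sum_sq_div (fun i => (ht_pos i).ne') (hts_sum.trans ht_sum.symm),
      mul_sum, ← sum_neg_distrib]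
    exact sum_congr rfl fun i _ => by ring
  refine ⟨hval, ?_, ?_⟩
  · rw [hval, neg_mul]
    exact neg_nonpos.mpr (mul_nonneg hc.le (sum_sq_div_nonneg ts ht_pos))
  · rw [hval, neg_mul, neg_eq_zero, mul_eq_zero_iff_left hc.ne', sum_sq_div_eq_zero_iff ht_pos,
      eq_comm]

theorem wang_landau_lyapunov_derivative
    (d : ℕ) (hd : 2 ≤ d)
    (ts : Fin d → ℝ) (hts_pos : ∀ i, 0 < ts i) (hts_sum : ∑ i, ts i = 1) :
    ∀ t ∈ simplexInt d,
      fderiv ℝ (fun t' : Fin d → ℝ => ∑ i, ts i * Real.log (ts i / t' i)) t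
          (fun i => (∑ j, ts j / t j)⁻¹ * (ts i - t i))
        = - (∑ j, ts j / t j)⁻¹ * ∑ i, (ts i - t i) ^ 2 / t i ∧
      fderiv ℝ (fun t' : Fin d → ℝ => ∑ i, ts i * Real.log (ts i / t' i)) t
          (fun i => (∑ j, ts j / t j)⁻¹ * (ts i - t i)) ≤ 0 ∧
      (fderiv ℝ (fun t' : Fin d → ℝ => ∑ i, ts i * Real.log (ts i / t' i)) t
          (fun i => (∑ j, ts j / t j)⁻¹ * (ts i - t i)) = 0 ↔ t = ts) :=
  wang_landau_lyapunov_derivative_general d ts hts_pos hts_sum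

end
end

section
/- For any θ, θ' ∈ Θ, the biased densities satisfy the total variation bound ‖π_θ dλ − π_{θ'} dλ‖_TV ≤ 2(d−1) Σ_{i=1}^d |1 − θ'(i)/θ(i)|. -/
open MeasureTheory ProbabilityTheory Filter Set Asymptotics
open scoped ENNReal NNReal Topology ENat

noncomputable section

/-! Write `A i = ∫_{X_i} f π dλ`. The integral of `f` against `π_θ` is
`(∑ A i / θ i) / (∑ θ⋆ i / θ i)`, an average of the ratios `A i / θ⋆ i ∈ [-1, 1]`. With
`v i = θ⋆ i / θ' i`, `a i = A i / θ' i` and `r i = θ' i / θ i`, the two averages to compare are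
`∑ r a / ∑ r v` and `∑ a / ∑ v`. Cross-multiplying, the numerator of their difference is
`∑ (r i - 1) (V a i - v i ∑ a)` with `V = ∑ v`, and each bracket is at most `2 v i (V - v i)`
because its `i`-th terms cancel. As `p (2 - p) ≤ 1` for `p = v i / V`, this gives the bound
`2 ∑ |1 - r i|` when that sum is at most `1`; otherwise the bound is trivial, both averages lying
in `[-1, 1]`. -/

open Finset

section WeightedAverage

variable {ι : Type*} [Fintype ι] {v a r : ι → ℝ}

theorem abs_sum_sub_le_sum_sub (ha : ∀ j, |a j| ≤ v j) (i : ι) :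
    |∑ j, a j - a i| ≤ ∑ j, v j - v i := by
  classical
  rw [← sum_erase_eq_sub (mem_univ i), ← sum_erase_eq_sub (mem_univ i)]
  exact (abs_sum_le_sum_abs _ _).trans (sum_le_sum fun j _ => ha j)

theorem abs_sum_mul_sub_mul_sum_le (ha : ∀ j, |a j| ≤ v j) (i : ι) :
    |(∑ j, v j) * a i - v i * ∑ j, a j| ≤ 2 * v i * (∑ j, v j - v i) := by
  have hvi : 0 ≤ v i := (abs_nonneg _).trans (ha i)
  have hrest := abs_sum_sub_le_sum_sub ha i
  have hrest_nonneg : 0 ≤ ∑ j, v j - v i := (abs_nonneg _).trans hrest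
  calc |(∑ j, v j) * a i - v i * ∑ j, a j|
      = |(∑ j, v j - v i) * a i - v i * (∑ j, a j - a i)| := by ring_nf
    _ ≤ (∑ j, v j - v i) * v i + v i * (∑ j, v j - v i) := by
      refine (abs_sub _ _).trans (add_le_add ?_ ?_) <;> rw [abs_mul]
      · rw [abs_of_nonneg hrest_nonneg]
        exact mul_le_mul_of_nonneg_left (ha i) hrest_nonneg
      · rw [abs_of_nonneg hvi]
        exact mul_le_mul_of_nonneg_left hrest hvi
    _ = 2 * v i * (∑ j, v j - v i) := by ring

theorem sum_mul_sum_sub_sum_mul_sum_eq (v a r : ι → ℝ) :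
    (∑ i, v i) * (∑ i, r i * a i) - (∑ i, r i * v i) * ∑ i, a i
      = ∑ i, (r i - 1) * ((∑ j, v j) * a i - v i * ∑ j, a j) := by
  have hsum : ∑ i, ((∑ j, v j) * a i - v i * ∑ j, a j) = 0 := by
    rw [sum_sub_distrib, ← mul_sum, ← sum_mul, mul_comm, sub_self]
  simp only [sub_one_mul]
  rw [sum_sub_distrib, hsum, sub_zero]
  simp only [mul_sub, sum_sub_distrib]
  rw [mul_sum, sum_mul]
  congr 1 <;> exact sum_congr rfl fun i _ => by ring

theorem abs_sum_div_sum_le_one (ha : ∀ j, |a j| ≤ v j) :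
    |(∑ j, a j) / ∑ j, v j| ≤ 1 := by
  rw [abs_div]
  exact div_le_one_of_le₀ ((abs_sum_le_sum_abs _ _).trans
    ((sum_le_sum fun j _ => ha j).trans (le_abs_self _))) (abs_nonneg _)

theorem abs_sum_mul_div_sum_mul_sub_sum_div_sum_le [Nonempty ι] (hv : ∀ i, 0 < v i)
    (ha : ∀ i, |a i| ≤ v i) (hr : ∀ i, 0 < r i) :
    |(∑ i, r i * a i) / (∑ i, r i * v i) - (∑ i, a i) / ∑ i, v i| ≤ 2 * ∑ i, |1 - r i| := by
  set V := ∑ i, v i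
  set R := ∑ i, r i * v i
  set s := ∑ i, |1 - r i|
  have hs0 : 0 ≤ s := sum_nonneg fun i _ => abs_nonneg _
  rcases le_total 1 s with hs | hs
  · have hra : ∀ i, |r i * a i| ≤ r i * v i := fun i => by
      rw [abs_mul, abs_of_pos (hr i)]
      exact mul_le_mul_of_nonneg_left (ha i) (hr i).le
    calc _ ≤ |(∑ i, r i * a i) / R| + |(∑ i, a i) / V| := abs_sub _ _
      _ ≤ 1 + 1 := add_le_add (abs_sum_div_sum_le_one hra) (abs_sum_div_sum_le_one ha)
      _ ≤ 2 * s := by linarith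
  have hV : 0 < V := sum_pos (fun i _ => hv i) univ_nonempty
  have hR : 0 < R := sum_pos (fun i _ => mul_pos (hr i) (hv i)) univ_nonempty
  set T := ∑ i, |1 - r i| * v i
  have hT : 0 ≤ T := sum_nonneg fun i _ => mul_nonneg (abs_nonneg _) (hv i).le
  have hRT : V - T ≤ R := by
    rw [← sum_sub_distrib]
    refine sum_le_sum fun i _ => ?_
    have := mul_le_mul_of_nonneg_right (by linarith [le_abs_self (1 - r i)] : 1 - |1 - r i| ≤ r i)
      (hv i).le
    linarith
  have hnum : |V * ∑ i, r i * a i - R * ∑ i, a i| ≤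
      2 * ∑ i, |1 - r i| * (v i * (V - v i)) := by
    rw [sum_mul_sum_sub_sum_mul_sum_eq, mul_sum]
    refine (abs_sum_le_sum_abs _ _).trans (sum_le_sum fun i _ => ?_)
    rw [abs_mul, abs_sub_comm]
    calc _ ≤ |1 - r i| * (2 * v i * (V - v i)) :=
          mul_le_mul_of_nonneg_left (abs_sum_mul_sub_mul_sum_le ha i) (abs_nonneg _)
      _ = _ := by ring
  have hquad : ∑ i, |1 - r i| * (v i * (V - v i)) + V * T ≤ s * V ^ 2 := by
    rw [mul_sum, sum_mul, ← sum_add_distrib]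
    exact sum_le_sum fun i _ => by nlinarith [abs_nonneg (1 - r i), sq_nonneg (V - v i)]
  rw [div_sub_div _ _ hR.ne' hV.ne', abs_div, abs_of_pos (mul_pos hR hV),
    div_le_iff₀ (mul_pos hR hV), mul_comm _ V]
  nlinarith [mul_le_mul_of_nonneg_left hRT (mul_nonneg hs0 hV.le),
    mul_nonneg (sub_nonneg.2 hs) (mul_nonneg hV.le hT)]

end WeightedAverage

theorem abs_sum_div_div_sum_div_sub_le {ι : Type*} [Fintype ι] [Nonempty ι] {w a t t' : ι → ℝ}
    (hw : ∀ i, 0 < w i) (ha : ∀ i, |a i| ≤ w i) (ht : ∀ i, 0 < t i) (ht' : ∀ i, 0 < t' i) :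
    |(∑ i, a i / t i) / (∑ i, w i / t i) - (∑ i, a i / t' i) / ∑ i, w i / t' i|
      ≤ 2 * ∑ i, |1 - t' i / t i| := by
  have hratio : ∀ (c : ι → ℝ) i, t' i / t i * (c i / t' i) = c i / t i := fun c i => by
    field_simp [(ht i).ne', (ht' i).ne']
  have key := abs_sum_mul_div_sum_mul_sub_sum_div_sum_le (v := fun i => w i / t' i)
    (a := fun i => a i / t' i) (r := fun i => t' i / t i) (fun i => div_pos (hw i) (ht' i))
    (fun i => by
      rw [abs_div, abs_of_pos (ht' i)]
      exact div_le_div_of_nonneg_right (ha i) (ht' i).le)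
    (fun i => div_pos (ht' i) (ht i))
  simpa only [hratio] using key

theorem Real.pos_of_iInf_pos {ι : Type*} {f : ι → ℝ} (h : 0 < ⨅ i, f i) (i : ι) : 0 < f i := by
  have hbdd : BddBelow (Set.range f) := by
    by_contra hbdd
    rw [Real.iInf_of_not_bddBelow hbdd] at h
    exact lt_irrefl 0 h
  exact h.trans_le (ciInf_le hbdd i)

namespace MeasureTheory

variable {E : Type*} [MeasurableSpace E] {μ : Measure E}

theorem abs_integral_mul_le_integral {f g : E → ℝ} (hg : Integrable g μ) (hg_nonneg : ∀ x, 0 ≤ g x)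
    (hf : ∀ x, |f x| ≤ 1) : |∫ x, f x * g x ∂μ| ≤ ∫ x, g x ∂μ :=
  norm_integral_le_of_norm_le (f := fun x => f x * g x) hg <| .of_forall fun x => by
    rw [Real.norm_eq_abs, abs_mul, abs_of_nonneg (hg_nonneg x)]
    exact mul_le_of_le_one_left (hg_nonneg x) (hf x)

theorem integral_mul_comp_eq_sum_setIntegral {ι : Type*} [Fintype ι] [MeasurableSpace ι]
    [MeasurableSingletonClass ι] {g : E → ℝ} {idx : E → ι} (hidx : Measurable idx)
    (hg : Integrable g μ) (c : ι → ℝ) :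
    ∫ x, g x * c (idx x) ∂μ = ∑ i, (∫ x in idx ⁻¹' {i}, g x ∂μ) * c i := by
  have hfiber : ∀ i, MeasurableSet (idx ⁻¹' {i}) := fun i => hidx (measurableSet_singleton i)
  have hconst : ∀ i, EqOn (fun x => g x * c i) (fun x => g x * c (idx x)) (idx ⁻¹' {i}) :=
    fun i x (hx : idx x = i) => by simp only [hx]
  have hcover : ⋃ i, idx ⁻¹' {i} = univ := iUnion_eq_univ_iff.2 fun x => ⟨idx x, rfl⟩
  rw [← setIntegral_univ, ← hcover,
    integral_iUnion_fintype hfiber (pairwise_disjoint_fiber idx)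
      fun i => (hg.mul_const (c i)).integrableOn.congr_fun (hconst i) (hfiber i)]
  exact sum_congr rfl fun i _ => by
    rw [← setIntegral_congr_fun (hfiber i) (hconst i), integral_mul_const]

end MeasureTheory

open MeasureTheory

section BiasedDensity

variable {E : Type*} [MeasurableSpace E] {lam : Measure E} {pdf : E → ℝ} {d : ℕ} {idx : E → Fin d}

theorem piB_apply (t : Fin d → ℝ) (x : E) :
    piB lam pdf idx t x = pdf x * (t (idx x))⁻¹ / ∑ i, thetaStarW lam pdf idx i / t i := by
  simp only [piB, mul_ite, mul_one, mul_zero, sum_ite_eq, Finset.mem_univ, if_true]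
  ring

theorem integral_mul_piB {f : E → ℝ} (hidx : Measurable idx)
    (hf : Integrable (fun x => f x * pdf x) lam) (t : Fin d → ℝ) :
    ∫ x, f x * piB lam pdf idx t x ∂lam
      = (∑ i, (∫ x in idx ⁻¹' {i}, f x * pdf x ∂lam) / t i)
          / ∑ i, thetaStarW lam pdf idx i / t i := by
  simp only [piB_apply, ← mul_div_assoc, ← mul_assoc]
  rw [integral_div, integral_mul_comp_eq_sum_setIntegral hidx hf fun i => (t i)⁻¹]
  simp only [div_eq_mul_inv]

end BiasedDensity

theorem wang_landau_tv_biased_densities_general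
    {E : Type*} [MeasurableSpace E]
    (d : ℕ) (hd : 2 ≤ d)
    (lam : Measure E) (pdf : E → ℝ) (idx : E → Fin d)
    -- (A1): `0 < inf π ≤ sup π < ∞` and `min_i θ⋆(i) > 0`, π a probability density
    (hpdf_prob : ∫ x, pdf x ∂lam = 1)
    (hpdf_inf : 0 < ⨅ x, pdf x)
    (hidx_meas : Measurable idx)
    (hts_pos : ∀ i, 0 < thetaStarW lam pdf idx i) :
    ∀ t ∈ simplexInt d, ∀ t' ∈ simplexInt d, ∀ f : E → ℝ, Measurable f →
      (∀ x, |f x| ≤ 1) →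
      |∫ x, f x * piB lam pdf idx t x ∂lam - ∫ x, f x * piB lam pdf idx t' x ∂lam|
        ≤ 2 * (d - 1) * ∑ i, |1 - t' i / t i| := by
  intro t ht t' ht' f hf hf_le
  have : Nonempty (Fin d) := ⟨⟨0, by omega⟩⟩
  have hpdf_nonneg : ∀ x, 0 ≤ pdf x := fun x => (Real.pos_of_iInf_pos hpdf_inf x).le
  have hpdf : Integrable pdf lam := .of_integral_ne_zero (by rw [hpdf_prob]; exact one_ne_zero)
  have hfpdf : Integrable (fun x => f x * pdf x) lam :=
    hpdf.bdd_mul hf.aestronglyMeasurable (.of_forall hf_le)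
  have hstratum : ∀ i, |∫ x in idx ⁻¹' {i}, f x * pdf x ∂lam| ≤ thetaStarW lam pdf idx i :=
    fun i => abs_integral_mul_le_integral hpdf.integrableOn hpdf_nonneg hf_le
  rw [integral_mul_piB hidx_meas hfpdf, integral_mul_piB hidx_meas hfpdf]
  calc _ ≤ 2 * ∑ i, |1 - t' i / t i| :=
        abs_sum_div_div_sum_div_sub_le hts_pos hstratum (fun i => (ht.1 i).1) fun i => (ht'.1 i).1
    _ ≤ 2 * (d - 1) * ∑ i, |1 - t' i / t i| := by
        have hd' : (2 : ℝ) ≤ d := by exact_mod_cast hd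
        gcongr
        linarith

theorem wang_landau_tv_biased_densities
    {E : Type*} [MeasurableSpace E] [TopologicalSpace E] [PolishSpace E] [BorelSpace E]
    [Nonempty E]
    (d : ℕ) (hd : 2 ≤ d)
    (lam : Measure E) (pdf : E → ℝ) (idx : E → Fin d)
    (q : E → E → ℝ) (P : (Fin d → ℝ) → Kernel E E)
    -- (A1): `0 < inf π ≤ sup π < ∞` and `min_i θ⋆(i) > 0`, π a probability density
    (hpdf_meas : Measurable pdf)
    (hpdf_prob : ∫ x, pdf x ∂lam = 1)
    (hpdf_inf : 0 < ⨅ x, pdf x)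
    (hpdf_sup : BddAbove (Set.range pdf))
    (hidx_meas : Measurable idx)
    (hts_pos : ∀ i, 0 < thetaStarW lam pdf idx i) :
    ∀ t ∈ simplexInt d, ∀ t' ∈ simplexInt d, ∀ f : E → ℝ, Measurable f →
      (∀ x, |f x| ≤ 1) →
      |∫ x, f x * piB lam pdf idx t x ∂lam - ∫ x, f x * piB lam pdf idx t' x ∂lam|
        ≤ 2 * (d - 1) * ∑ i, |1 - t' i / t i| :=
  wang_landau_tv_biased_densities_general d hd lam pdf idx hpdf_prob hpdf_inf hidx_meas hts_pos

end
end

section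
/- For any θ, θ' ∈ Θ and any x ∈ X such that π_θ(x) ≤ π_{θ'}(x), the Metropolis kernels satisfy ‖P_θ(x,·) − P_{θ'}(x,·)‖_TV ≤ 2 (2 sup_{1≤i≤d} |1 − θ(i)/θ'(i)| + sup_{1≤i≤d} |1 − θ'(i)/θ(i)|). -/
open MeasureTheory ProbabilityTheory Filter Set Asymptotics
open scoped ENNReal NNReal Topology ENat

noncomputable section

private lemma piB_eq' {E : Type*} [MeasurableSpace E] (lam : Measure E) (pdf : E → ℝ)
    {d : ℕ} (idx : E → Fin d) (s : Fin d → ℝ) (z : E) :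
    piB lam pdf idx s z = (∑ i, thetaStarW lam pdf idx i / s i)⁻¹ * (pdf z / s (idx z)) := by
  unfold piB
  congr 1
  simp [mul_ite]

private lemma ratio_eq' {Z Z' py px ty tx ty' tx' : ℝ} (hZ : Z ≠ 0) (hZ' : Z' ≠ 0)
    (hpx : px ≠ 0) (hpy : py ≠ 0) (htx : tx ≠ 0) (hty : ty ≠ 0)
    (htx' : tx' ≠ 0) (hty' : ty' ≠ 0) :
    (Z'⁻¹ * (py / ty')) / (Z'⁻¹ * (px / tx'))
      = ((Z⁻¹ * (py / ty)) / (Z⁻¹ * (px / tx))) * ((tx' / tx) * (ty / ty')) := by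
  field_simp

private lemma abs_integral_le' {E : Type*} [MeasurableSpace E] (mu : Measure E) (f : E → ℝ) :
    |∫ y, f y ∂mu| ≤ ∫ y, |f y| ∂mu := by
  simpa [Real.norm_eq_abs] using norm_integral_le_integral_norm (μ := mu) f

private lemma real_iInf_le' {ι : Sort*} {F : ι → ℝ} (h : 0 < ⨅ i, F i) (i : ι) :
    (⨅ j, F j) ≤ F i := by
  by_cases hb : BddBelow (Set.range F)
  · exact ciInf_le hb i
  · rw [Real.iInf_of_not_bddBelow hb] at h
    exact absurd h (lt_irrefl 0)

private lemma aux_min_abs' {a b : ℝ} (ha : 0 < a) (hb : 0 ≤ b) :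
    |min 1 a - min 1 b| ≤ |1 - b / a| := by
  have h : (1:ℝ) - b / a = (a - b) / a := by field_simp
  rw [h, abs_div, abs_of_pos ha, le_div_iff₀ ha]
  rcases le_or_gt a 1 with h1 | h1 <;> rcases le_or_gt b 1 with h2 | h2
  · rw [min_eq_right h1, min_eq_right h2]
    nlinarith [abs_nonneg (a - b)]
  · rw [min_eq_right h1, min_eq_left h2.le, abs_of_nonpos (by linarith : a - 1 ≤ 0),
      abs_of_nonpos (by linarith : a - b ≤ 0)]
    nlinarith
  · rw [min_eq_left h1.le, min_eq_right h2, abs_of_nonneg (by linarith : (0:ℝ) ≤ 1 - b),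
      abs_of_nonneg (by linarith : (0:ℝ) ≤ a - b)]
    nlinarith
  · rw [min_eq_left h1.le, min_eq_left h2.le]
    simp [abs_nonneg]

private lemma mh_integral' {E : Type*} [MeasurableSpace E] (lam : Measure E) (g f : E → ℝ) (x : E)
    (hg_meas : Measurable g) (hg0 : ∀ y, 0 ≤ g y) (hg_int : Integrable g lam)
    (hg1 : ∫ z, g z ∂lam ≤ 1)
    (hf : Measurable f) (hfb : ∀ y, |f y| ≤ 1) :
    ∫ y, f y ∂(lam.withDensity (fun y => ENNReal.ofReal (g y))
        + (ENNReal.ofReal (1 - ∫ z, g z ∂lam)) • Measure.dirac x)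
      = ∫ y, f y * g y ∂lam + (1 - ∫ z, g z ∂lam) * f x := by
  have hlint : ∫⁻ y, ENNReal.ofReal (g y) ∂lam = ENNReal.ofReal (∫ z, g z ∂lam) :=
    (ofReal_integral_eq_lintegral_ofReal hg_int (Filter.Eventually.of_forall hg0)).symm
  haveI hfin : IsFiniteMeasure (lam.withDensity fun y => ENNReal.ofReal (g y)) :=
    isFiniteMeasure_withDensity (by rw [hlint]; exact ENNReal.ofReal_ne_top)
  have hint1 : Integrable f (lam.withDensity fun y => ENNReal.ofReal (g y)) :=
    (integrable_const 1).mono' hf.aestronglyMeasurable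
      (Filter.Eventually.of_forall fun y => by rw [Real.norm_eq_abs]; exact hfb y)
  have hint2 : Integrable f ((ENNReal.ofReal (1 - ∫ z, g z ∂lam)) • Measure.dirac x) := by
    refine Integrable.smul_measure ?_ ENNReal.ofReal_ne_top
    exact (integrable_const 1).mono' hf.aestronglyMeasurable
      (Filter.Eventually.of_forall fun y => by rw [Real.norm_eq_abs]; exact hfb y)
  rw [integral_add_measure hint1 hint2, integral_smul_measure,
    integral_dirac' f x hf.stronglyMeasurable,
    ENNReal.toReal_ofReal (by linarith), smul_eq_mul]
  congr 1
  have hcoe : (fun y => ENNReal.ofReal (g y)) = fun y => ((g y).toNNReal : ℝ≥0∞) := rfl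
  rw [hcoe, integral_withDensity_eq_integral_smul (f := fun y => (g y).toNNReal) (measurable_real_toNNReal.comp hg_meas)]
  refine integral_congr_ae (Filter.Eventually.of_forall fun y => ?_)
  simp [NNReal.smul_def, Real.coe_toNNReal _ (hg0 y), mul_comm]

theorem wang_landau_tv_kernels
    {E : Type*} [MeasurableSpace E] [TopologicalSpace E] [PolishSpace E] [BorelSpace E]
    [Nonempty E]
    (d : ℕ) (hd : 2 ≤ d)
    (lam : Measure E) (pdf : E → ℝ) (idx : E → Fin d)
    (q : E → E → ℝ) (P : (Fin d → ℝ) → Kernel E E)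
    -- (A1): `0 < inf π ≤ sup π < ∞` and `min_i θ⋆(i) > 0`, π a probability density
    (hpdf_meas : Measurable pdf)
    (hpdf_prob : ∫ x, pdf x ∂lam = 1)
    (hpdf_inf : 0 < ⨅ x, pdf x)
    (hpdf_sup : BddAbove (Set.range pdf))
    (hidx_meas : Measurable idx)
    (hts_pos : ∀ i, 0 < thetaStarW lam pdf idx i)
    -- (A2): symmetric Metropolis-Hastings kernels with proposal density `q`, `inf q > 0`
    (hq_symm : ∀ x y, q x y = q y x)
    (hq_meas : Measurable (Function.uncurry q))
    (hq_inf : 0 < ⨅ p : E × E, q p.1 p.2)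
    (hq_prob : ∀ x, ∫ y, q x y ∂lam = 1)
    (hP : ∀ t ∈ simplexInt d, IsMHKernel lam q (piB lam pdf idx t) (P t)) :
    ∀ t ∈ simplexInt d, ∀ t' ∈ simplexInt d, ∀ x : E,
      piB lam pdf idx t x ≤ piB lam pdf idx t' x →
      ∀ f : E → ℝ, Measurable f → (∀ y, |f y| ≤ 1) →
        |∫ y, f y ∂(P t x) - ∫ y, f y ∂(P t' x)|
          ≤ 2 * (2 * (⨆ i, |1 - t i / t' i|) + ⨆ i, |1 - t' i / t i|) := by
  intro t ht t' ht' x _hle f hf hfb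
  haveI : Nonempty (Fin d) := ⟨⟨0, by omega⟩⟩
  have ht_pos : ∀ i, 0 < t i := fun i => (ht.1 i).1
  have ht'_pos : ∀ i, 0 < t' i := fun i => (ht'.1 i).1
  have hpdf_pos : ∀ z, 0 < pdf z := fun z =>
    lt_of_lt_of_le hpdf_inf (real_iInf_le' hpdf_inf z)
  have hq_pos : ∀ a b, 0 < q a b := fun a b =>
    lt_of_lt_of_le hq_inf (real_iInf_le' hq_inf (a, b))
  -- the sup bounds
  set S := ⨆ i, |1 - t i / t' i| with hSdef
  set S' := ⨆ i, |1 - t' i / t i| with hS'def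
  have hSle : ∀ i, |1 - t i / t' i| ≤ S := fun i =>
    le_ciSup (f := fun j => |1 - t j / t' j|) (Set.Finite.bddAbove (Set.finite_range _)) i
  have hS'le : ∀ i, |1 - t' i / t i| ≤ S' := fun i =>
    le_ciSup (f := fun j => |1 - t' j / t j|) (Set.Finite.bddAbove (Set.finite_range _)) i
  have hS0 : 0 ≤ S := le_trans (abs_nonneg _) (hSle ⟨0, by omega⟩)
  have hS'0 : 0 ≤ S' := le_trans (abs_nonneg _) (hS'le ⟨0, by omega⟩)
  -- formula and positivity for piB
  have hpiBf : ∀ (s : Fin d → ℝ) (z : E), piB lam pdf idx s z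
      = (∑ i, thetaStarW lam pdf idx i / s i)⁻¹ * (pdf z / s (idx z)) :=
    fun s z => piB_eq' lam pdf idx s z
  have hZpos : ∀ s : Fin d → ℝ, (∀ i, 0 < s i) →
      0 < ∑ i, thetaStarW lam pdf idx i / s i := fun s hs =>
    Finset.sum_pos (fun i _ => div_pos (hts_pos i) (hs i)) Finset.univ_nonempty
  have hpB_pos : ∀ (s : Fin d → ℝ), (∀ i, 0 < s i) → ∀ z, 0 < piB lam pdf idx s z := by
    intro s hs z
    rw [hpiBf]
    exact mul_pos (inv_pos.mpr (hZpos s hs)) (div_pos (hpdf_pos z) (hs (idx z)))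
  have hpB_meas : ∀ s : Fin d → ℝ, Measurable (piB lam pdf idx s) := by
    intro s
    unfold piB
    refine Measurable.const_mul ?_ _
    refine Finset.measurable_sum _ fun i _ => ?_
    exact (hpdf_meas.div_const _).mul
      (Measurable.ite (hidx_meas (measurableSet_singleton i)) measurable_const measurable_const)
  -- pointwise bound on the difference of acceptance ratios
  have halpha : ∀ y, |min 1 (piB lam pdf idx t y / piB lam pdf idx t x)
      - min 1 (piB lam pdf idx t' y / piB lam pdf idx t' x)| ≤ 2 * S + S' := by
    intro y
    have ha : 0 < piB lam pdf idx t y / piB lam pdf idx t x :=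
      div_pos (hpB_pos t ht_pos y) (hpB_pos t ht_pos x)
    have hb : 0 < piB lam pdf idx t' y / piB lam pdf idx t' x :=
      div_pos (hpB_pos t' ht'_pos y) (hpB_pos t' ht'_pos x)
    rcases le_or_gt 1 (2 * S + S') with hcase | hcase
    · have h1 : 0 ≤ min 1 (piB lam pdf idx t y / piB lam pdf idx t x) :=
        le_min zero_le_one ha.le
      have h2 : min 1 (piB lam pdf idx t y / piB lam pdf idx t x) ≤ 1 := min_le_left _ _
      have h3 : 0 ≤ min 1 (piB lam pdf idx t' y / piB lam pdf idx t' x) :=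
        le_min zero_le_one hb.le
      have h4 : min 1 (piB lam pdf idx t' y / piB lam pdf idx t' x) ≤ 1 := min_le_left _ _
      exact le_trans (abs_le.mpr ⟨by linarith, by linarith⟩) hcase
    · have hS'1 : S' ≤ 1 := by linarith
      have hu_abs : |1 - t' (idx x) / t (idx x)| ≤ S' := hS'le (idx x)
      have hv_abs : |1 - t (idx y) / t' (idx y)| ≤ S := hSle (idx y)
      have hu0 : 0 < t' (idx x) / t (idx x) := div_pos (ht'_pos _) (ht_pos _)
      have hu2 : t' (idx x) / t (idx x) ≤ 2 := by
        have := neg_abs_le (1 - t' (idx x) / t (idx x))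
        linarith
      have hBA : piB lam pdf idx t' y / piB lam pdf idx t' x
          = (piB lam pdf idx t y / piB lam pdf idx t x) *
            ((t' (idx x) / t (idx x)) * (t (idx y) / t' (idx y))) := by
        rw [hpiBf t y, hpiBf t x, hpiBf t' y, hpiBf t' x]
        exact ratio_eq' (hZpos t ht_pos).ne' (hZpos t' ht'_pos).ne'
          (hpdf_pos x).ne' (hpdf_pos y).ne' (ht_pos (idx x)).ne' (ht_pos (idx y)).ne'
          (ht'_pos (idx x)).ne' (ht'_pos (idx y)).ne'
      calc |min 1 (piB lam pdf idx t y / piB lam pdf idx t x)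
            - min 1 (piB lam pdf idx t' y / piB lam pdf idx t' x)|
          ≤ |1 - (piB lam pdf idx t' y / piB lam pdf idx t' x)
              / (piB lam pdf idx t y / piB lam pdf idx t x)| := aux_min_abs' ha hb.le
        _ = |1 - (t' (idx x) / t (idx x)) * (t (idx y) / t' (idx y))| := by
            rw [hBA, mul_comm, mul_div_assoc, div_self ha.ne', mul_one]
        _ ≤ |1 - t' (idx x) / t (idx x)|
            + (t' (idx x) / t (idx x)) * |1 - t (idx y) / t' (idx y)| := by
            have hsplit : 1 - (t' (idx x) / t (idx x)) * (t (idx y) / t' (idx y))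
                = (1 - t' (idx x) / t (idx x))
                  + (t' (idx x) / t (idx x)) * (1 - t (idx y) / t' (idx y)) := by ring
            rw [hsplit]
            refine le_trans (abs_add_le _ _) ?_
            rw [abs_mul, abs_of_pos hu0]
        _ ≤ 2 * S + S' := by
            nlinarith [abs_nonneg (1 - t (idx y) / t' (idx y))]
  -- measurability / integrability of the densities
  have hg_meas : ∀ s : Fin d → ℝ,
      Measurable fun y => q x y * min 1 (piB lam pdf idx s y / piB lam pdf idx s x) :=
    fun s => (hq_meas.comp (measurable_const.prodMk measurable_id)).mul
      (measurable_const.min ((hpB_meas s).div_const _))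
  have hg0 : ∀ (s : Fin d → ℝ), (∀ i, 0 < s i) → ∀ y,
      0 ≤ q x y * min 1 (piB lam pdf idx s y / piB lam pdf idx s x) :=
    fun s hs y => mul_nonneg (hq_pos x y).le
      (le_min zero_le_one (div_pos (hpB_pos s hs y) (hpB_pos s hs x)).le)
  have hgle : ∀ (s : Fin d → ℝ) (y : E),
      q x y * min 1 (piB lam pdf idx s y / piB lam pdf idx s x) ≤ q x y := by
    intro s y
    calc q x y * min 1 (piB lam pdf idx s y / piB lam pdf idx s x)
        ≤ q x y * 1 := mul_le_mul_of_nonneg_left (min_le_left _ _) (hq_pos x y).le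
      _ = q x y := mul_one _
  have hq_int : Integrable (fun y => q x y) lam := by
    by_contra hcon
    have h1 := hq_prob x
    rw [integral_undef hcon] at h1
    norm_num at h1
  have hg_int : ∀ (s : Fin d → ℝ), (∀ i, 0 < s i) →
      Integrable (fun y => q x y * min 1 (piB lam pdf idx s y / piB lam pdf idx s x)) lam :=
    fun s hs => hq_int.mono' (hg_meas s).aestronglyMeasurable
      (Filter.Eventually.of_forall fun y => by
        rw [Real.norm_eq_abs, abs_of_nonneg (hg0 s hs y)]; exact hgle s y)
  have hgI1 : ∀ (s : Fin d → ℝ), (∀ i, 0 < s i) →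
      ∫ z, q x z * min 1 (piB lam pdf idx s z / piB lam pdf idx s x) ∂lam ≤ 1 := by
    intro s hs
    calc ∫ z, q x z * min 1 (piB lam pdf idx s z / piB lam pdf idx s x) ∂lam
        ≤ ∫ z, q x z ∂lam := integral_mono (hg_int s hs) hq_int (hgle s)
      _ = 1 := hq_prob x
  -- the two integral formulas
  have e1 : ∫ y, f y ∂(P t x)
      = ∫ y, f y * (q x y * min 1 (piB lam pdf idx t y / piB lam pdf idx t x)) ∂lam
        + (1 - ∫ z, q x z * min 1 (piB lam pdf idx t z / piB lam pdf idx t x) ∂lam) * f x := by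
    rw [hP t ht x]
    exact mh_integral' lam _ f x (hg_meas t) (hg0 t ht_pos) (hg_int t ht_pos) (hgI1 t ht_pos) hf hfb
  have e2 : ∫ y, f y ∂(P t' x)
      = ∫ y, f y * (q x y * min 1 (piB lam pdf idx t' y / piB lam pdf idx t' x)) ∂lam
        + (1 - ∫ z, q x z * min 1 (piB lam pdf idx t' z / piB lam pdf idx t' x) ∂lam) * f x := by
    rw [hP t' ht' x]
    exact mh_integral' lam _ f x (hg_meas t') (hg0 t' ht'_pos) (hg_int t' ht'_pos)
      (hgI1 t' ht'_pos) hf hfb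
  -- integrability of f * g
  have hfg_int : ∀ (s : Fin d → ℝ), (∀ i, 0 < s i) →
      Integrable (fun y => f y * (q x y * min 1 (piB lam pdf idx s y / piB lam pdf idx s x)))
        lam :=
    fun s hs => hq_int.mono' (hf.mul (hg_meas s)).aestronglyMeasurable
      (Filter.Eventually.of_forall fun y => by
        rw [Real.norm_eq_abs, abs_mul, abs_of_nonneg (hg0 s hs y)]
        nlinarith [hfb y, hg0 s hs y, hgle s y, abs_nonneg (f y)])
  -- the L¹ distance between the two densities
  have hDelta_bd : ∀ y, |q x y * min 1 (piB lam pdf idx t y / piB lam pdf idx t x)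
      - q x y * min 1 (piB lam pdf idx t' y / piB lam pdf idx t' x)| ≤ q x y * (2 * S + S') := by
    intro y
    have hfac : q x y * min 1 (piB lam pdf idx t y / piB lam pdf idx t x)
        - q x y * min 1 (piB lam pdf idx t' y / piB lam pdf idx t' x)
        = q x y * (min 1 (piB lam pdf idx t y / piB lam pdf idx t x)
            - min 1 (piB lam pdf idx t' y / piB lam pdf idx t' x)) := by ring
    rw [hfac, abs_mul, abs_of_pos (hq_pos x y)]
    exact mul_le_mul_of_nonneg_left (halpha y) (hq_pos x y).le
  have hDelta_int : Integrable (fun y =>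
      q x y * min 1 (piB lam pdf idx t y / piB lam pdf idx t x)
      - q x y * min 1 (piB lam pdf idx t' y / piB lam pdf idx t' x)) lam :=
    (hg_int t ht_pos).sub (hg_int t' ht'_pos)
  have hJ : ∫ y, |q x y * min 1 (piB lam pdf idx t y / piB lam pdf idx t x)
      - q x y * min 1 (piB lam pdf idx t' y / piB lam pdf idx t' x)| ∂lam ≤ 2 * S + S' := by
    calc ∫ y, |q x y * min 1 (piB lam pdf idx t y / piB lam pdf idx t x)
          - q x y * min 1 (piB lam pdf idx t' y / piB lam pdf idx t' x)| ∂lam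
        ≤ ∫ y, q x y * (2 * S + S') ∂lam :=
          integral_mono hDelta_int.abs (hq_int.mul_const _) hDelta_bd
      _ = (∫ y, q x y ∂lam) * (2 * S + S') := integral_mul_const _ _
      _ = 2 * S + S' := by rw [hq_prob x, one_mul]
  have hJ0 : 0 ≤ ∫ y, |q x y * min 1 (piB lam pdf idx t y / piB lam pdf idx t x)
      - q x y * min 1 (piB lam pdf idx t' y / piB lam pdf idx t' x)| ∂lam :=
    integral_nonneg fun y => abs_nonneg _
  -- |A - A'| ≤ J
  have hA : |∫ y, f y * (q x y * min 1 (piB lam pdf idx t y / piB lam pdf idx t x)) ∂lam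
      - ∫ y, f y * (q x y * min 1 (piB lam pdf idx t' y / piB lam pdf idx t' x)) ∂lam|
      ≤ ∫ y, |q x y * min 1 (piB lam pdf idx t y / piB lam pdf idx t x)
          - q x y * min 1 (piB lam pdf idx t' y / piB lam pdf idx t' x)| ∂lam := by
    rw [← integral_sub (hfg_int t ht_pos) (hfg_int t' ht'_pos)]
    refine le_trans (abs_integral_le' lam _) ?_
    refine integral_mono ((hfg_int t ht_pos).sub (hfg_int t' ht'_pos)).abs hDelta_int.abs
      fun y => ?_
    have hfac : f y * (q x y * min 1 (piB lam pdf idx t y / piB lam pdf idx t x))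
        - f y * (q x y * min 1 (piB lam pdf idx t' y / piB lam pdf idx t' x))
        = f y * (q x y * min 1 (piB lam pdf idx t y / piB lam pdf idx t x)
            - q x y * min 1 (piB lam pdf idx t' y / piB lam pdf idx t' x)) := by ring
    rw [hfac, abs_mul]
    nlinarith [hfb y, abs_nonneg (f y), abs_nonneg
      (q x y * min 1 (piB lam pdf idx t y / piB lam pdf idx t x)
        - q x y * min 1 (piB lam pdf idx t' y / piB lam pdf idx t' x))]
  -- |I' - I| ≤ J
  have hI : |∫ z, q x z * min 1 (piB lam pdf idx t' z / piB lam pdf idx t' x) ∂lam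
      - ∫ z, q x z * min 1 (piB lam pdf idx t z / piB lam pdf idx t x) ∂lam|
      ≤ ∫ y, |q x y * min 1 (piB lam pdf idx t y / piB lam pdf idx t x)
          - q x y * min 1 (piB lam pdf idx t' y / piB lam pdf idx t' x)| ∂lam := by
    rw [← integral_sub (hg_int t' ht'_pos) (hg_int t ht_pos)]
    refine le_trans (abs_integral_le' lam _) ?_
    refine integral_mono ((hg_int t' ht'_pos).sub (hg_int t ht_pos)).abs hDelta_int.abs
      fun y => ?_
    rw [abs_sub_comm]
  rw [e1, e2]
  have hrw : ∫ y, f y * (q x y * min 1 (piB lam pdf idx t y / piB lam pdf idx t x)) ∂lam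
        + (1 - ∫ z, q x z * min 1 (piB lam pdf idx t z / piB lam pdf idx t x) ∂lam) * f x
      - (∫ y, f y * (q x y * min 1 (piB lam pdf idx t' y / piB lam pdf idx t' x)) ∂lam
        + (1 - ∫ z, q x z * min 1 (piB lam pdf idx t' z / piB lam pdf idx t' x) ∂lam) * f x)
      = (∫ y, f y * (q x y * min 1 (piB lam pdf idx t y / piB lam pdf idx t x)) ∂lam
          - ∫ y, f y * (q x y * min 1 (piB lam pdf idx t' y / piB lam pdf idx t' x)) ∂lam)
        + (∫ z, q x z * min 1 (piB lam pdf idx t' z / piB lam pdf idx t' x) ∂lam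
          - ∫ z, q x z * min 1 (piB lam pdf idx t z / piB lam pdf idx t x) ∂lam) * f x := by
    ring
  rw [hrw]
  refine le_trans (abs_add_le _ _) ?_
  rw [abs_mul]
  nlinarith [hA, hI, hJ, hJ0, hfb x, abs_nonneg (f x),
    abs_nonneg (∫ z, q x z * min 1 (piB lam pdf idx t' z / piB lam pdf idx t' x) ∂lam
      - ∫ z, q x z * min 1 (piB lam pdf idx t z / piB lam pdf idx t x) ∂lam)]

end
end

section
/- Under Assumptions A3(a) and A3(c), along the Wang–Landau trajectory one has ‖π_{θ_n} dλ − π_{θ_{n+1}} dλ‖_TV ≤ 2d(d−1) γ_{n+1} for every n ≥ 0, and for every N ≥ 0 and all n ≥ N, sup_{x ∈ X} ‖P_{θ_n}(x,·) − P_{θ_{n+1}}(x,·)‖_TV ≤ 4 (1 + 1/(1 − sup_{m ≥ N} γ_{m+1})) γ_{n+1}. -/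
open MeasureTheory ProbabilityTheory Filter Set Asymptotics
open scoped ENNReal NNReal Topology ENat

noncomputable section

/-- If `c ≥ 0` and `ρ > 0` then `|1 ∧ cρ - 1 ∧ c| ≤ |ρ - 1|`. -/
lemma wlAux_min_one_ratio_abs (c ρ : ℝ) (hc : 0 ≤ c) (hρ : 0 < ρ) :
    |min 1 (c * ρ) - min 1 c| ≤ |ρ - 1| := by
  rcases le_or_gt (c * ρ) 1 with h1 | h1 <;> rcases le_or_gt c 1 with h2 | h2
  · rw [min_eq_right h1, min_eq_right h2]
    have he : c * ρ - c = c * (ρ - 1) := by ring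
    rw [he, abs_mul, abs_of_nonneg hc]
    exact mul_le_of_le_one_left (abs_nonneg _) h2
  · rw [min_eq_right h1, min_eq_left h2.le]
    have hρ1 : ρ ≤ 1 := by nlinarith
    rw [abs_of_nonpos (by nlinarith : c * ρ - 1 ≤ 0)]
    calc -(c * ρ - 1) = 1 - c * ρ := by ring
      _ ≤ 1 - ρ := by nlinarith
      _ ≤ |ρ - 1| := by rw [abs_sub_comm]; exact (le_abs_self _).trans_eq rfl
  · rw [min_eq_left h1.le, min_eq_right h2]
    have hc0 : 0 < c := by nlinarith
    have hρ1 : 1 ≤ ρ := by nlinarith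
    rw [abs_of_nonneg (by linarith : (0:ℝ) ≤ 1 - c)]
    have h3 : 1 - c ≤ ρ - 1 := by
      nlinarith [mul_nonneg (sub_nonneg.2 h2) (sub_nonneg.2 hρ1)]
    exact h3.trans (le_abs_self _)
  · rw [min_eq_left h1.le, min_eq_left h2.le]
    simp [abs_nonneg]

lemma wlAux_tv_le_of {d : ℕ} (p p' : Fin d → ℝ) (K : Fin d) (γ0 : ℝ)
    (hsum : ∑ i, p i = 1) (hsum' : ∑ i, p' i = 1)
    (hB : ∀ i, i ≠ K → p i ≤ p' i) (hC : p K - p' K ≤ γ0) :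
    ∑ i, |p i - p' i| ≤ 2 * γ0 := by
  have h0 : ∑ i ∈ Finset.univ.erase K, (p' i - p i) = p K - p' K := by
    have e1 : ∑ i, (p' i - p i) = 0 := by
      rw [Finset.sum_sub_distrib, hsum, hsum']; ring
    have e2 := Finset.add_sum_erase Finset.univ (fun i => p' i - p i) (Finset.mem_univ K)
    linarith [e2.trans e1]
  have hKnn : 0 ≤ p K - p' K := by
    rw [← h0]
    exact Finset.sum_nonneg fun i hi => by
      linarith [hB i (Finset.ne_of_mem_erase hi)]
  rw [← Finset.add_sum_erase Finset.univ (fun i => |p i - p' i|) (Finset.mem_univ K)]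
  have h2 : ∑ i ∈ Finset.univ.erase K, |p i - p' i|
      = ∑ i ∈ Finset.univ.erase K, (p' i - p i) := by
    refine Finset.sum_congr rfl fun i hi => ?_
    rw [abs_sub_comm, abs_of_nonneg (by linarith [hB i (Finset.ne_of_mem_erase hi)])]
  rw [abs_of_nonneg hKnn, h2, h0]
  linarith

lemma wlAux_ratio (A B py px ti tj Di Dj : ℝ) (hA : A ≠ 0) (hB : B ≠ 0) (hpx : px ≠ 0)
    (hti : ti ≠ 0) (htj : tj ≠ 0) (hDi : Di ≠ 0) (hDj : Dj ≠ 0) :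
    (A * (py / (tj * Dj))) / (A * (px / (ti * Di)))
      = ((B * (py / tj)) / (B * (px / ti))) * (Di / Dj) := by
  field_simp

lemma wlAux_core {d : ℕ} (w t t' : Fin d → ℝ) (K : Fin d) (γ0 : ℝ)
    (hw : ∀ i, 0 < w i) (ht : ∀ i, 0 < t i) (hs1 : t K < 1)
    (hγ0 : 0 ≤ γ0) (hγ1 : γ0 < 1)
    (ht' : ∀ i, t' i = t i * (1 + γ0 * ((if K = i then 1 else 0) - t K))) :
    ∑ i, |w i * ((∑ j, w j / t j)⁻¹ / t i) - w i * ((∑ j, w j / t' j)⁻¹ / t' i)|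
      ≤ 2 * γ0 := by
  have aux1 : ∀ a c R : ℝ, c ≠ 0 → R ≠ 0 → a / c / (R / c) = a / R := by
    intro a c R hc hR; field_simp
  have aux2 : ∀ a D1 D2 R : ℝ, D1 ≠ 0 → D2 ≠ 0 → R ≠ 0 →
      (a / D2) / (R / D1) = a * D1 / (D2 * R) := by
    intro a D1 D2 R h1 h2 h3; field_simp
  have aux3 : ∀ a D1 D2 R : ℝ, D2 ≠ 0 → R ≠ 0 →
      a / R - a * D1 / (D2 * R) = (a * D2 - a * D1) / (D2 * R) := by
    intro a D1 D2 R h2 h3; field_simp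
  have hs0 : 0 < t K := ht K
  have hd1 : (0:ℝ) < 1 - γ0 * t K := by nlinarith
  have hd2 : (1:ℝ) ≤ 1 + γ0 * (1 - t K) := by nlinarith
  have hd2' : (0:ℝ) < 1 + γ0 * (1 - t K) := by linarith
  have ht'K : t' K = t K * (1 + γ0 * (1 - t K)) := by rw [ht' K, if_pos rfl]
  have ht'ne : ∀ i, i ≠ K → t' i = t i * (1 - γ0 * t K) := by
    intro i hi
    rw [ht' i, if_neg (Ne.symm hi)]
    ring_nf
  have ht'pos : ∀ i, 0 < t' i := by
    intro i
    rcases eq_or_ne i K with rfl | hi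
    · rw [ht'K]; exact mul_pos hs0 hd2'
    · rw [ht'ne i hi]; exact mul_pos (ht i) hd1
  have hr'ne : ∀ i, i ≠ K → w i / t' i = (w i / t i) / (1 - γ0 * t K) := by
    intro i hi
    rw [ht'ne i hi, div_mul_eq_div_div]
  have hr'K : w K / t' K = (w K / t K) / (1 + γ0 * (1 - t K)) := by
    rw [ht'K, div_mul_eq_div_div]
  have hRpos : 0 < ∑ j, w j / t j :=
    Finset.sum_pos (fun i _ => div_pos (hw i) (ht i)) ⟨K, Finset.mem_univ K⟩
  have hR'pos : 0 < ∑ j, w j / t' j :=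
    Finset.sum_pos (fun i _ => div_pos (hw i) (ht'pos i)) ⟨K, Finset.mem_univ K⟩
  have hR'le : (∑ j, w j / t' j) ≤ (∑ j, w j / t j) / (1 - γ0 * t K) := by
    rw [Finset.sum_div]
    refine Finset.sum_le_sum fun i _ => ?_
    rcases eq_or_ne i K with rfl | hi
    · rw [hr'K]
      exact div_le_div_of_nonneg_left (div_pos (hw i) (ht i)).le hd1 (by linarith)
    · rw [hr'ne i hi]
  have hgoal : ∀ i, |w i * ((∑ j, w j / t j)⁻¹ / t i) - w i * ((∑ j, w j / t' j)⁻¹ / t' i)|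
      = |(w i / t i) / (∑ j, w j / t j) - (w i / t' i) / (∑ j, w j / t' j)| := by
    intro i
    congr 2 <;> · simp only [div_eq_mul_inv]; ring
  rw [Finset.sum_congr rfl fun i _ => hgoal i]
  apply wlAux_tv_le_of _ _ K γ0
  · rw [← Finset.sum_div, div_self hRpos.ne']
  · rw [← Finset.sum_div, div_self hR'pos.ne']
  · intro i hi
    rw [hr'ne i hi]
    rw [← aux1 (w i / t i) (1 - γ0 * t K) (∑ j, w j / t j) hd1.ne' hRpos.ne']
    exact div_le_div_of_nonneg_left
      (div_nonneg (div_pos (hw i) (ht i)).le hd1.le) hR'pos hR'le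
  · rw [hr'K]
    have h2 : (w K / t K / (1 + γ0 * (1 - t K))) / ((∑ j, w j / t j) / (1 - γ0 * t K))
        ≤ (w K / t K / (1 + γ0 * (1 - t K))) / (∑ j, w j / t' j) :=
      div_le_div_of_nonneg_left
        (div_nonneg (div_pos (hw K) (ht K)).le hd2'.le) hR'pos hR'le
    rw [aux2 (w K / t K) (1 - γ0 * t K) (1 + γ0 * (1 - t K)) (∑ j, w j / t j)
      hd1.ne' hd2'.ne' hRpos.ne'] at h2
    have haR : w K / t K ≤ ∑ j, w j / t j :=
      Finset.single_le_sum (fun i _ => (div_pos (hw i) (ht i)).le) (Finset.mem_univ K)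
    have ha0 : 0 < w K / t K := div_pos (hw K) (ht K)
    have key : (w K / t K) / (∑ j, w j / t j)
        - (w K / t K) * (1 - γ0 * t K) / ((1 + γ0 * (1 - t K)) * (∑ j, w j / t j)) ≤ γ0 := by
      rw [aux3 (w K / t K) (1 - γ0 * t K) (1 + γ0 * (1 - t K)) (∑ j, w j / t j)
        hd2'.ne' hRpos.ne']
      rw [div_le_iff₀ (mul_pos hd2' hRpos)]
      nlinarith [mul_nonneg hγ0 hRpos.le]
    linarith


set_option maxHeartbeats 4000000 in
theorem wang_landau_regularity_along_trajectory
    {E : Type*} [MeasurableSpace E] [TopologicalSpace E] [PolishSpace E] [BorelSpace E]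
    [Nonempty E]
    {Ω : Type*} [MeasurableSpace Ω] (Pr : Measure Ω) [IsProbabilityMeasure Pr]
    (d : ℕ) (hd : 2 ≤ d)
    (lam : Measure E) (pdf : E → ℝ) (idx : E → Fin d)
    (q : E → E → ℝ) (P : (Fin d → ℝ) → Kernel E E)
    (γ : ℕ → ℝ) (X : ℕ → Ω → E) (θ : ℕ → Ω → Fin d → ℝ)
    -- (A1): `0 < inf π ≤ sup π < ∞` and `min_i θ⋆(i) > 0`, π a probability density
    (hpdf_meas : Measurable pdf)
    (hpdf_prob : ∫ x, pdf x ∂lam = 1)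
    (hpdf_inf : 0 < ⨅ x, pdf x)
    (hpdf_sup : BddAbove (Set.range pdf))
    (hidx_meas : Measurable idx)
    (hts_pos : ∀ i, 0 < thetaStarW lam pdf idx i)
    -- (A2): symmetric Metropolis-Hastings kernels with proposal density `q`, `inf q > 0`
    (hq_symm : ∀ x y, q x y = q y x)
    (hq_meas : Measurable (Function.uncurry q))
    (hq_inf : 0 < ⨅ p : E × E, q p.1 p.2)
    (hq_prob : ∀ x, ∫ y, q x y ∂lam = 1)
    (hP : ∀ t ∈ simplexInt d, IsMHKernel lam q (piB lam pdf idx t) (P t))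
    -- (A3a): step sizes in [0,1), non-increasing, tending to 0
    (hγ01 : ∀ n, 1 ≤ n → 0 ≤ γ n ∧ γ n < 1)
    (hγ_mono : ∀ m n, 1 ≤ m → m ≤ n → γ n ≤ γ m)
    (hγ_lim : Tendsto γ atTop (𝓝 0))
    -- (A3c)
    (hγ_sq : Summable fun n => γ n ^ 2)
    -- the Wang-Landau process
    (hθ0 : ∀ ω, θ 0 ω ∈ simplexInt d)
    (hX_meas : ∀ n, Measurable (X n))
    (hθ_meas : ∀ n, Measurable (θ n))
    (hupdate : ∀ n ω i, θ (n+1) ω i =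
      θ n ω i + γ (n+1) * (θ n ω i *
        ((if idx (X (n+1) ω) = i then 1 else 0) - θ n ω (idx (X (n+1) ω)))))
    (hmarkov : ∀ n (f : E → ℝ), Measurable f → (∃ C, ∀ x, |f x| ≤ C) →
      (fun ω => ∫ y, f y ∂(P (θ n ω) (X n ω))) =ᵐ[Pr]
        Pr[(fun ω => f (X (n+1) ω)) | wlSigma X θ n]) :
    (∀ ω : Ω, ∀ n : ℕ, ∀ f : E → ℝ, Measurable f → (∀ x, |f x| ≤ 1) →
      |∫ x, f x * piB lam pdf idx (θ n ω) x ∂lam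
          - ∫ x, f x * piB lam pdf idx (θ (n+1) ω) x ∂lam|
        ≤ 2 * d * (d - 1) * γ (n+1)) ∧
    ∀ N : ℕ, ∀ n : ℕ, N ≤ n → ∀ ω : Ω, ∀ x : E, ∀ f : E → ℝ, Measurable f →
      (∀ y, |f y| ≤ 1) →
      |∫ y, f y ∂(P (θ n ω) x) - ∫ y, f y ∂(P (θ (n+1) ω) x)|
        ≤ 4 * (1 + (1 - ⨆ m : {m : ℕ // N ≤ m}, γ (m.1 + 1))⁻¹) * γ (n+1) := by
  classical
  have hd0 : 0 < d := by omega
  have hpdf_int : Integrable pdf lam := by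
    by_contra h
    rw [integral_undef h] at hpdf_prob
    norm_num at hpdf_prob
  have hpdf_pos : ∀ x, 0 < pdf x := by
    intro x
    by_cases hb : BddBelow (Set.range pdf)
    · exact lt_of_lt_of_le hpdf_inf (ciInf_le hb x)
    · rw [Real.iInf_of_not_bddBelow hb] at hpdf_inf
      exact absurd hpdf_inf (lt_irrefl 0)
  have hq_pos : ∀ x y, 0 < q x y := by
    intro x y
    by_cases hb : BddBelow (Set.range fun p : E × E => q p.1 p.2)
    · exact lt_of_lt_of_le hq_inf (ciInf_le hb (x, y))
    · rw [Real.iInf_of_not_bddBelow hb] at hq_inf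
      exact absurd hq_inf (lt_irrefl 0)
  have hθmem : ∀ ω n, θ n ω ∈ simplexInt d := by
    intro ω n
    induction n with
    | zero => exact hθ0 ω
    | succ n ih =>
      obtain ⟨hpos, hsum⟩ := ih
      have hγn := hγ01 (n+1) (by omega)
      have hfac : ∀ i, θ (n+1) ω i = θ n ω i *
          (1 + γ (n+1) * ((if idx (X (n+1) ω) = i then 1 else 0)
            - θ n ω (idx (X (n+1) ω)))) := by
        intro i; rw [hupdate n ω i]; ring
      have hpos' : ∀ i, 0 < θ (n+1) ω i := by
        intro i
        rw [hfac i]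
        refine mul_pos (hpos i).1 ?_
        have h1 := (hpos (idx (X (n+1) ω))).1
        have h2 := (hpos (idx (X (n+1) ω))).2
        split_ifs with h <;> nlinarith [hγn.1, hγn.2]
      have hsum' : ∑ i, θ (n+1) ω i = 1 := by
        have hterm : ∀ i, θ (n+1) ω i
            = θ n ω i * (1 - γ (n+1) * θ n ω (idx (X (n+1) ω)))
              + γ (n+1) * (if idx (X (n+1) ω) = i then θ n ω i else 0) := by
          intro i; rw [hupdate n ω i]; split_ifs <;> ring
        rw [Finset.sum_congr rfl fun i _ => hterm i, Finset.sum_add_distrib,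
          ← Finset.sum_mul, hsum, ← Finset.mul_sum,
          Finset.sum_ite_eq Finset.univ (idx (X (n+1) ω)) (θ n ω),
          if_pos (Finset.mem_univ _)]
        ring
      refine ⟨fun i => ⟨hpos' i, ?_⟩, hsum'⟩
      have hcard : (Finset.univ.erase i).Nonempty := by
        rw [← Finset.card_pos, Finset.card_erase_of_mem (Finset.mem_univ i),
          Finset.card_univ, Fintype.card_fin]
        omega
      have hrest : 0 < ∑ j ∈ Finset.univ.erase i, θ (n+1) ω j :=
        Finset.sum_pos (fun j _ => hpos' j) hcard
      have hsplit := Finset.add_sum_erase Finset.univ (θ (n+1) ω) (Finset.mem_univ i)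
      linarith [hsplit.trans hsum']
  have piB_eq : ∀ (t : Fin d → ℝ) (x : E), piB lam pdf idx t x
      = (∑ i, thetaStarW lam pdf idx i / t i)⁻¹ * (pdf x / t (idx x)) := by
    intro t x
    unfold piB
    congr 1
    have h1 : ∀ i : Fin d, (pdf x / t i) * (if idx x = i then 1 else 0)
        = if idx x = i then pdf x / t i else 0 := by
      intro i; split_ifs <;> ring
    rw [Finset.sum_congr rfl fun i _ => h1 i,
      Finset.sum_ite_eq Finset.univ (idx x) (fun i => pdf x / t i),
      if_pos (Finset.mem_univ _)]
  have hpiB_meas : ∀ t : Fin d → ℝ, Measurable (piB lam pdf idx t) := by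
    intro t
    have he : piB lam pdf idx t
        = fun x => (∑ i, thetaStarW lam pdf idx i / t i)⁻¹ * (pdf x / t (idx x)) :=
      funext fun x => piB_eq t x
    rw [he]
    exact measurable_const.mul (hpdf_meas.div ((measurable_of_countable t).comp hidx_meas))
  constructor
  · -- Part 1
    intro ω n f hf hf1
    have hγn := hγ01 (n+1) (by omega)
    obtain ⟨hpos, hsum⟩ := hθmem ω n
    obtain ⟨hpos', hsum'⟩ := hθmem ω (n+1)
    have hRpos : 0 < ∑ j, thetaStarW lam pdf idx j / θ n ω j :=
      Finset.sum_pos (fun j _ => div_pos (hts_pos j) (hpos j).1)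
        ⟨⟨0, hd0⟩, Finset.mem_univ _⟩
    have hR'pos : 0 < ∑ j, thetaStarW lam pdf idx j / θ (n+1) ω j :=
      Finset.sum_pos (fun j _ => div_pos (hts_pos j) (hpos' j).1)
        ⟨⟨0, hd0⟩, Finset.mem_univ _⟩
    set k : Fin d → ℝ :=
      fun i => (∑ j, thetaStarW lam pdf idx j / θ n ω j)⁻¹ / θ n ω i with hk
    set k' : Fin d → ℝ :=
      fun i => (∑ j, thetaStarW lam pdf idx j / θ (n+1) ω j)⁻¹ / θ (n+1) ω i with hk'
    have hπ : ∀ x, piB lam pdf idx (θ n ω) x = k (idx x) * pdf x := by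
      intro x; rw [piB_eq, hk]; ring
    have hπ' : ∀ x, piB lam pdf idx (θ (n+1) ω) x = k' (idx x) * pdf x := by
      intro x; rw [piB_eq, hk']; ring
    have hint : ∀ u : Fin d → ℝ, (∀ i, 0 < u i) →
        Integrable (fun x => f x * piB lam pdf idx u x) lam := by
      intro u hu
      have hm : Measurable fun x => f x * piB lam pdf idx u x := hf.mul (hpiB_meas u)
      refine Integrable.mono'
        (hpdf_int.const_mul
          (|(∑ j, thetaStarW lam pdf idx j / u j)⁻¹| * ∑ i, (u i)⁻¹))
        hm.aestronglyMeasurable (Filter.Eventually.of_forall fun x => ?_)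
      rw [Real.norm_eq_abs, abs_mul]
      have h2 : |piB lam pdf idx u x|
          ≤ |(∑ j, thetaStarW lam pdf idx j / u j)⁻¹| * (∑ i, (u i)⁻¹) * pdf x := by
        rw [piB_eq u x, abs_mul]
        have h3 : |pdf x / u (idx x)| = pdf x * (u (idx x))⁻¹ := by
          rw [abs_of_nonneg (div_nonneg (hpdf_pos x).le (hu (idx x)).le), div_eq_mul_inv]
        rw [h3]
        have h4 : (u (idx x))⁻¹ ≤ ∑ i, (u i)⁻¹ :=
          Finset.single_le_sum (fun i _ => inv_nonneg.2 (hu i).le) (Finset.mem_univ (idx x))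
        calc |(∑ j, thetaStarW lam pdf idx j / u j)⁻¹| * (pdf x * (u (idx x))⁻¹)
            ≤ |(∑ j, thetaStarW lam pdf idx j / u j)⁻¹| * (pdf x * ∑ i, (u i)⁻¹) :=
              mul_le_mul_of_nonneg_left
                (mul_le_mul_of_nonneg_left h4 (hpdf_pos x).le) (abs_nonneg _)
          _ = |(∑ j, thetaStarW lam pdf idx j / u j)⁻¹| * (∑ i, (u i)⁻¹) * pdf x := by
              ring
      calc |f x| * |piB lam pdf idx u x|
          ≤ 1 * (|(∑ j, thetaStarW lam pdf idx j / u j)⁻¹| * (∑ i, (u i)⁻¹) * pdf x) :=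
            mul_le_mul (hf1 x) h2 (abs_nonneg _) zero_le_one
        _ = |(∑ j, thetaStarW lam pdf idx j / u j)⁻¹| * (∑ i, (u i)⁻¹) * pdf x :=
            one_mul _
    have hintt := hint (θ n ω) fun i => (hpos i).1
    have hintt' := hint (θ (n+1) ω) fun i => (hpos' i).1
    have hGint : ∀ i : Fin d, Integrable
        (fun x => |k i - k' i| * Set.indicator (idx ⁻¹' {i}) pdf x) lam :=
      fun i => (hpdf_int.indicator (hidx_meas (measurableSet_singleton i))).const_mul _
    have hptw : ∀ x, |f x * piB lam pdf idx (θ n ω) x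
        - f x * piB lam pdf idx (θ (n+1) ω) x|
        ≤ ∑ i, |k i - k' i| * Set.indicator (idx ⁻¹' {i}) pdf x := by
      intro x
      have hGx : (∑ i, |k i - k' i| * Set.indicator (idx ⁻¹' {i}) pdf x)
          = |k (idx x) - k' (idx x)| * pdf x := by
        have h1 : ∀ i : Fin d, |k i - k' i| * Set.indicator (idx ⁻¹' {i}) pdf x
            = if idx x = i then |k i - k' i| * pdf x else 0 := by
          intro i
          rw [Set.indicator_apply]
          simp only [Set.mem_preimage, Set.mem_singleton_iff]
          split_ifs <;> ring
        rw [Finset.sum_congr rfl fun i _ => h1 i,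
          Finset.sum_ite_eq Finset.univ (idx x) (fun i => |k i - k' i| * pdf x),
          if_pos (Finset.mem_univ _)]
      rw [hGx, hπ x, hπ' x]
      have he : f x * (k (idx x) * pdf x) - f x * (k' (idx x) * pdf x)
          = f x * ((k (idx x) - k' (idx x)) * pdf x) := by ring
      rw [he, abs_mul]
      calc |f x| * |(k (idx x) - k' (idx x)) * pdf x|
          ≤ 1 * |(k (idx x) - k' (idx x)) * pdf x| :=
            mul_le_mul_of_nonneg_right (hf1 x) (abs_nonneg _)
        _ = |k (idx x) - k' (idx x)| * pdf x := by
            rw [one_mul, abs_mul, abs_of_nonneg (hpdf_pos x).le]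
    calc |∫ x, f x * piB lam pdf idx (θ n ω) x ∂lam
        - ∫ x, f x * piB lam pdf idx (θ (n+1) ω) x ∂lam|
        = |∫ x, (f x * piB lam pdf idx (θ n ω) x
            - f x * piB lam pdf idx (θ (n+1) ω) x) ∂lam| := by
          rw [integral_sub hintt hintt']
      _ ≤ ∫ x, |f x * piB lam pdf idx (θ n ω) x
            - f x * piB lam pdf idx (θ (n+1) ω) x| ∂lam := by
          simpa [Real.norm_eq_abs] using norm_integral_le_integral_norm
            (fun x => f x * piB lam pdf idx (θ n ω) x
              - f x * piB lam pdf idx (θ (n+1) ω) x) (μ := lam)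
      _ ≤ ∫ x, (∑ i, |k i - k' i| * Set.indicator (idx ⁻¹' {i}) pdf x) ∂lam :=
          integral_mono (hintt.sub hintt').abs
            (integrable_finset_sum _ fun i _ => hGint i) hptw
      _ = ∑ i, |k i - k' i| * thetaStarW lam pdf idx i := by
          rw [integral_finset_sum _ fun i _ => hGint i]
          refine Finset.sum_congr rfl fun i _ => ?_
          rw [integral_const_mul, integral_indicator (hidx_meas (measurableSet_singleton i))]
          rfl
      _ = ∑ i, |thetaStarW lam pdf idx i * k i - thetaStarW lam pdf idx i * k' i| := by
          refine Finset.sum_congr rfl fun i _ => ?_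
          rw [show thetaStarW lam pdf idx i * k i - thetaStarW lam pdf idx i * k' i
            = (k i - k' i) * thetaStarW lam pdf idx i from by ring, abs_mul,
            abs_of_nonneg (hts_pos i).le]
      _ ≤ 2 * γ (n+1) := by
          simp only [hk, hk']
          exact wlAux_core (thetaStarW lam pdf idx) (θ n ω) (θ (n+1) ω)
            (idx (X (n+1) ω)) (γ (n+1)) hts_pos (fun i => (hpos i).1)
            (hpos (idx (X (n+1) ω))).2 hγn.1 hγn.2
            (fun i => by rw [hupdate n ω i]; ring)
      _ ≤ 2 * d * (d - 1) * γ (n+1) := by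
          have h2d : (2:ℝ) ≤ (d:ℝ) := by exact_mod_cast hd
          have hdd : (2:ℝ) ≤ 2 * (d:ℝ) * ((d:ℝ) - 1) := by nlinarith
          exact mul_le_mul_of_nonneg_right hdd hγn.1
  · -- Part 2
    intro N n hNn ω x f hf hf1
    have hγn := hγ01 (n+1) (by omega)
    obtain ⟨hpos, hsum⟩ := hθmem ω n
    obtain ⟨hpos', hsum'⟩ := hθmem ω (n+1)
    have hqx_meas : Measurable fun y => q x y := hq_meas.comp measurable_prodMk_left
    have hqx_int : Integrable (fun y => q x y) lam := by
      have h1 := hq_prob x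
      by_contra h
      rw [integral_undef h] at h1
      norm_num at h1
    -- representation of the kernel integrals
    have hrepr : ∀ u : Fin d → ℝ, u ∈ simplexInt d →
        ∫ y, f y ∂(P u x)
          = (∫ y, (q x y * min 1 (piB lam pdf idx u y / piB lam pdf idx u x)) * f y ∂lam)
            + (1 - ∫ z, q x z * min 1 (piB lam pdf idx u z / piB lam pdf idx u x) ∂lam)
              * f x := by
      intro u hu
      have hRu : 0 < ∑ j, thetaStarW lam pdf idx j / u j :=
        Finset.sum_pos (fun j _ => div_pos (hts_pos j) (hu.1 j).1)
          ⟨⟨0, hd0⟩, Finset.mem_univ _⟩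
      have hpiBx : 0 < piB lam pdf idx u x := by
        rw [piB_eq]
        exact mul_pos (inv_pos.2 hRu) (div_pos (hpdf_pos x) (hu.1 (idx x)).1)
      have hα0 : ∀ y, 0 ≤ min 1 (piB lam pdf idx u y / piB lam pdf idx u x) := by
        intro y
        refine le_min zero_le_one (div_nonneg ?_ hpiBx.le)
        rw [piB_eq]
        exact mul_nonneg (inv_pos.2 hRu).le (div_nonneg (hpdf_pos y).le (hu.1 (idx y)).1.le)
      have hα1 : ∀ y, min 1 (piB lam pdf idx u y / piB lam pdf idx u x) ≤ 1 :=
        fun y => min_le_left _ _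
      have hαm : Measurable fun y => min 1 (piB lam pdf idx u y / piB lam pdf idx u x) :=
        measurable_const.min ((hpiB_meas u).div_const _)
      have hqα_meas : Measurable
          (fun y => q x y * min 1 (piB lam pdf idx u y / piB lam pdf idx u x)) :=
        hqx_meas.mul hαm
      have hqα_nn : ∀ y, 0 ≤ q x y * min 1 (piB lam pdf idx u y / piB lam pdf idx u x) :=
        fun y => mul_nonneg (hq_pos x y).le (hα0 y)
      have hqα_le : ∀ y, q x y * min 1 (piB lam pdf idx u y / piB lam pdf idx u x)
          ≤ q x y := fun y => mul_le_of_le_one_right (hq_pos x y).le (hα1 y)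
      have hqα_int : Integrable
          (fun y => q x y * min 1 (piB lam pdf idx u y / piB lam pdf idx u x)) lam :=
        hqx_int.mono' hqα_meas.aestronglyMeasurable
          (Filter.Eventually.of_forall fun y => by
            rw [Real.norm_eq_abs, abs_of_nonneg (hqα_nn y)]; exact hqα_le y)
      have hρ1 : (∫ z, q x z * min 1 (piB lam pdf idx u z / piB lam pdf idx u x) ∂lam)
          ≤ 1 := by
        calc (∫ z, q x z * min 1 (piB lam pdf idx u z / piB lam pdf idx u x) ∂lam)
            ≤ ∫ y, q x y ∂lam := integral_mono hqα_int hqx_int hqα_le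
          _ = 1 := hq_prob x
      have hlint : (∫⁻ y, ENNReal.ofReal
          (q x y * min 1 (piB lam pdf idx u y / piB lam pdf idx u x)) ∂lam) ≠ ⊤ := by
        rw [← ofReal_integral_eq_lintegral_ofReal hqα_int
          (Filter.Eventually.of_forall hqα_nn)]
        exact ENNReal.ofReal_ne_top
      haveI hfin1 : IsFiniteMeasure (lam.withDensity fun y => ENNReal.ofReal
          (q x y * min 1 (piB lam pdf idx u y / piB lam pdf idx u x))) :=
        isFiniteMeasure_withDensity hlint
      haveI hfin2 : IsFiniteMeasure ((ENNReal.ofReal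
          (1 - ∫ z, q x z * min 1 (piB lam pdf idx u z / piB lam pdf idx u x) ∂lam))
            • (Measure.dirac x : Measure E)) := by
        constructor
        rw [Measure.smul_apply, smul_eq_mul]
        exact ENNReal.mul_lt_top ENNReal.ofReal_lt_top (by simp)
      have hf_int1 : Integrable f (lam.withDensity fun y => ENNReal.ofReal
          (q x y * min 1 (piB lam pdf idx u y / piB lam pdf idx u x))) :=
        (integrable_const (1:ℝ)).mono' hf.aestronglyMeasurable
          (Filter.Eventually.of_forall fun y => by
            rw [Real.norm_eq_abs]; exact hf1 y)
      have hf_int2 : Integrable f ((ENNReal.ofReal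
          (1 - ∫ z, q x z * min 1 (piB lam pdf idx u z / piB lam pdf idx u x) ∂lam))
            • (Measure.dirac x : Measure E)) :=
        (integrable_const (1:ℝ)).mono' hf.aestronglyMeasurable
          (Filter.Eventually.of_forall fun y => by
            rw [Real.norm_eq_abs]; exact hf1 y)
      rw [hP u hu x, integral_add_measure hf_int1 hf_int2]
      congr 1
      · have heq : (fun y => ENNReal.ofReal
            (q x y * min 1 (piB lam pdf idx u y / piB lam pdf idx u x)))
            = fun y => (((q x y * min 1 (piB lam pdf idx u y / piB lam pdf idx u x)).toNNReal
                : ℝ≥0) : ℝ≥0∞) := rfl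
        rw [heq, integral_withDensity_eq_integral_smul hqα_meas.real_toNNReal f]
        refine integral_congr_ae (Filter.Eventually.of_forall fun y => ?_)
        simp only [NNReal.smul_def, smul_eq_mul]
        rw [Real.coe_toNNReal _ (hqα_nn y)]
      · rw [integral_smul_measure, integral_dirac, ENNReal.toReal_ofReal (by linarith),
          smul_eq_mul]
    rw [hrepr (θ n ω) (hθmem ω n), hrepr (θ (n+1) ω) (hθmem ω (n+1))]
    -- pointwise bound on acceptance-ratio differences
    have hRpos : 0 < ∑ j, thetaStarW lam pdf idx j / θ n ω j :=
      Finset.sum_pos (fun j _ => div_pos (hts_pos j) (hpos j).1)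
        ⟨⟨0, hd0⟩, Finset.mem_univ _⟩
    have hR'pos : 0 < ∑ j, thetaStarW lam pdf idx j / θ (n+1) ω j :=
      Finset.sum_pos (fun j _ => div_pos (hts_pos j) (hpos' j).1)
        ⟨⟨0, hd0⟩, Finset.mem_univ _⟩
    have hpiBx : 0 < piB lam pdf idx (θ n ω) x := by
      rw [piB_eq]
      exact mul_pos (inv_pos.2 hRpos) (div_pos (hpdf_pos x) (hpos (idx x)).1)
    have hγpos : 0 < 1 - γ (n+1) := by linarith [hγn.2]
    have hsK0 := (hpos (idx (X (n+1) ω))).1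
    have hsK1 := (hpos (idx (X (n+1) ω))).2
    have hdiff : ∀ y, |min 1 (piB lam pdf idx (θ n ω) y / piB lam pdf idx (θ n ω) x)
        - min 1 (piB lam pdf idx (θ (n+1) ω) y / piB lam pdf idx (θ (n+1) ω) x)|
        ≤ γ (n+1) / (1 - γ (n+1)) := by
      intro y
      obtain ⟨ei, hei⟩ : ∃ e : ℝ, e = (if idx (X (n+1) ω) = idx x then (1:ℝ) else 0) :=
        ⟨_, rfl⟩
      obtain ⟨ej, hej⟩ : ∃ e : ℝ, e = (if idx (X (n+1) ω) = idx y then (1:ℝ) else 0) :=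
        ⟨_, rfl⟩
      have hei01 : ei = 0 ∨ ei = 1 := by rw [hei]; split_ifs <;> simp
      have hej01 : ej = 0 ∨ ej = 1 := by rw [hej]; split_ifs <;> simp
      have hei0 : 0 ≤ ei := by rcases hei01 with h | h <;> rw [h] <;> norm_num
      have hej0 : 0 ≤ ej := by rcases hej01 with h | h <;> rw [h] <;> norm_num
      have hdeni : 0 < 1 + γ (n+1) * (ei - θ n ω (idx (X (n+1) ω))) := by
        nlinarith [hγn.1, hγn.2]
      have hdenj : 0 < 1 + γ (n+1) * (ej - θ n ω (idx (X (n+1) ω))) := by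
        nlinarith [hγn.1, hγn.2]
      have hbx : θ (n+1) ω (idx x)
          = θ n ω (idx x) * (1 + γ (n+1) * (ei - θ n ω (idx (X (n+1) ω)))) := by
        rw [hupdate n ω (idx x), hei]; ring
      have hby : θ (n+1) ω (idx y)
          = θ n ω (idx y) * (1 + γ (n+1) * (ej - θ n ω (idx (X (n+1) ω)))) := by
        rw [hupdate n ω (idx y), hej]; ring
      have hc0 : 0 ≤ piB lam pdf idx (θ n ω) y / piB lam pdf idx (θ n ω) x := by
        refine div_nonneg ?_ hpiBx.le
        rw [piB_eq]
        exact mul_nonneg (inv_pos.2 hRpos).le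
          (div_nonneg (hpdf_pos y).le (hpos (idx y)).1.le)
      have hρpos : 0 < (1 + γ (n+1) * (ei - θ n ω (idx (X (n+1) ω))))
          / (1 + γ (n+1) * (ej - θ n ω (idx (X (n+1) ω)))) := div_pos hdeni hdenj
      have hid : piB lam pdf idx (θ (n+1) ω) y / piB lam pdf idx (θ (n+1) ω) x
          = (piB lam pdf idx (θ n ω) y / piB lam pdf idx (θ n ω) x)
            * ((1 + γ (n+1) * (ei - θ n ω (idx (X (n+1) ω))))
              / (1 + γ (n+1) * (ej - θ n ω (idx (X (n+1) ω))))) := by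
        rw [piB_eq (θ (n+1) ω) y, piB_eq (θ (n+1) ω) x, piB_eq (θ n ω) y,
          piB_eq (θ n ω) x, hbx, hby]
        exact wlAux_ratio _ _ _ _ _ _ _ _ (inv_ne_zero hR'pos.ne') (inv_ne_zero hRpos.ne')
          (hpdf_pos x).ne' (hpos (idx x)).1.ne' (hpos (idx y)).1.ne' hdeni.ne' hdenj.ne'
      rw [hid, abs_sub_comm]
      refine (wlAux_min_one_ratio_abs _ _ hc0 hρpos).trans ?_
      have h1 : (1 + γ (n+1) * (ei - θ n ω (idx (X (n+1) ω))))
          / (1 + γ (n+1) * (ej - θ n ω (idx (X (n+1) ω)))) - 1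
          = (γ (n+1) * (ei - ej)) / (1 + γ (n+1) * (ej - θ n ω (idx (X (n+1) ω)))) := by
        field_simp
        ring
      rw [h1, abs_div, abs_of_pos hdenj]
      have hnum : |γ (n+1) * (ei - ej)| ≤ γ (n+1) := by
        rw [abs_mul, abs_of_nonneg hγn.1]
        have he1 : |ei - ej| ≤ 1 := by
          rcases hei01 with h | h <;> rcases hej01 with h' | h' <;>
            rw [h, h'] <;> norm_num
        nlinarith [hγn.1]
      have hden : 1 - γ (n+1) ≤ 1 + γ (n+1) * (ej - θ n ω (idx (X (n+1) ω))) := by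
        nlinarith [hγn.1]
      exact div_le_div₀ hγn.1 hnum hγpos hden
    -- integral difference bounds
    have hmk : ∀ (u : Fin d → ℝ), (∀ i, 0 < u i) → 0 < ∑ j, thetaStarW lam pdf idx j / u j →
        ∀ (g : E → ℝ), Measurable g → (∀ y, |g y| ≤ 1) →
        Integrable (fun y =>
          (q x y * min 1 (piB lam pdf idx u y / piB lam pdf idx u x)) * g y) lam := by
      intro u hu hRu g hg hb
      have hαm : Measurable fun y => min 1 (piB lam pdf idx u y / piB lam pdf idx u x) :=
        measurable_const.min ((hpiB_meas u).div_const _)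
      have hm : Measurable fun y =>
          (q x y * min 1 (piB lam pdf idx u y / piB lam pdf idx u x)) * g y :=
        (hqx_meas.mul hαm).mul hg
      have hpiBxu : 0 < piB lam pdf idx u x := by
        rw [piB_eq]
        exact mul_pos (inv_pos.2 hRu) (div_pos (hpdf_pos x) (hu (idx x)))
      refine hqx_int.mono' hm.aestronglyMeasurable (Filter.Eventually.of_forall fun y => ?_)
      rw [Real.norm_eq_abs, abs_mul, abs_mul]
      have hα0 : 0 ≤ min 1 (piB lam pdf idx u y / piB lam pdf idx u x) := by
        refine le_min zero_le_one (div_nonneg ?_ hpiBxu.le)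
        rw [piB_eq]
        exact mul_nonneg (inv_pos.2 hRu).le (div_nonneg (hpdf_pos y).le (hu (idx y)).le)
      rw [abs_of_nonneg (hq_pos x y).le, abs_of_nonneg hα0]
      calc q x y * min 1 (piB lam pdf idx u y / piB lam pdf idx u x) * |g y|
          ≤ q x y * 1 * 1 := by
            refine mul_le_mul (mul_le_mul le_rfl (min_le_left _ _) hα0 (hq_pos x y).le)
              (hb y) (abs_nonneg _) ?_
            exact mul_nonneg (hq_pos x y).le zero_le_one
        _ = q x y := by ring
    have habs : ∀ (g : E → ℝ), Measurable g → (∀ y, |g y| ≤ 1) →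
        |(∫ y, (q x y * min 1 (piB lam pdf idx (θ n ω) y / piB lam pdf idx (θ n ω) x))
            * g y ∂lam)
          - (∫ y, (q x y * min 1 (piB lam pdf idx (θ (n+1) ω) y
              / piB lam pdf idx (θ (n+1) ω) x)) * g y ∂lam)|
          ≤ γ (n+1) / (1 - γ (n+1)) := by
      intro g hg hb
      have hI1 := hmk (θ n ω) (fun i => (hpos i).1) hRpos g hg hb
      have hI2 := hmk (θ (n+1) ω) (fun i => (hpos' i).1) hR'pos g hg hb
      rw [← integral_sub hI1 hI2]
      have hB0 : 0 ≤ γ (n+1) / (1 - γ (n+1)) := div_nonneg hγn.1 hγpos.le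
      have hmono : ∀ y, |(q x y * min 1 (piB lam pdf idx (θ n ω) y
            / piB lam pdf idx (θ n ω) x)) * g y
          - (q x y * min 1 (piB lam pdf idx (θ (n+1) ω) y
              / piB lam pdf idx (θ (n+1) ω) x)) * g y|
          ≤ q x y * (γ (n+1) / (1 - γ (n+1))) := by
        intro y
        have he : (q x y * min 1 (piB lam pdf idx (θ n ω) y
              / piB lam pdf idx (θ n ω) x)) * g y
            - (q x y * min 1 (piB lam pdf idx (θ (n+1) ω) y
                / piB lam pdf idx (θ (n+1) ω) x)) * g y
            = q x y * ((min 1 (piB lam pdf idx (θ n ω) y / piB lam pdf idx (θ n ω) x)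
              - min 1 (piB lam pdf idx (θ (n+1) ω) y
                / piB lam pdf idx (θ (n+1) ω) x)) * g y) := by ring
        rw [he, abs_mul, abs_of_nonneg (hq_pos x y).le, abs_mul]
        refine mul_le_mul_of_nonneg_left ?_ (hq_pos x y).le
        calc |min 1 (piB lam pdf idx (θ n ω) y / piB lam pdf idx (θ n ω) x)
              - min 1 (piB lam pdf idx (θ (n+1) ω) y
                / piB lam pdf idx (θ (n+1) ω) x)| * |g y|
            ≤ (γ (n+1) / (1 - γ (n+1))) * 1 :=
              mul_le_mul (hdiff y) (hb y) (abs_nonneg _) hB0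
          _ = γ (n+1) / (1 - γ (n+1)) := mul_one _
      calc |∫ y, ((q x y * min 1 (piB lam pdf idx (θ n ω) y
              / piB lam pdf idx (θ n ω) x)) * g y
            - (q x y * min 1 (piB lam pdf idx (θ (n+1) ω) y
                / piB lam pdf idx (θ (n+1) ω) x)) * g y) ∂lam|
          ≤ ∫ y, |(q x y * min 1 (piB lam pdf idx (θ n ω) y
              / piB lam pdf idx (θ n ω) x)) * g y
            - (q x y * min 1 (piB lam pdf idx (θ (n+1) ω) y
                / piB lam pdf idx (θ (n+1) ω) x)) * g y| ∂lam := by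
            simpa [Real.norm_eq_abs] using norm_integral_le_integral_norm
              (fun y => (q x y * min 1 (piB lam pdf idx (θ n ω) y
                / piB lam pdf idx (θ n ω) x)) * g y
              - (q x y * min 1 (piB lam pdf idx (θ (n+1) ω) y
                  / piB lam pdf idx (θ (n+1) ω) x)) * g y) (μ := lam)
        _ ≤ ∫ y, q x y * (γ (n+1) / (1 - γ (n+1))) ∂lam :=
            integral_mono (hI1.sub hI2).abs (hqx_int.mul_const _)
              (fun y => hmono y)
        _ = γ (n+1) / (1 - γ (n+1)) := by
            rw [integral_mul_const, hq_prob x, one_mul]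
    have hA := habs f hf hf1
    have hρ := habs (fun _ => 1) measurable_const (fun y => by norm_num)
    simp only [mul_one] at hρ
    -- numeric conclusion
    haveI : Nonempty {m : ℕ // N ≤ m} := ⟨⟨N, le_rfl⟩⟩
    have hbddG : BddAbove (Set.range fun m : {m : ℕ // N ≤ m} => γ (m.1 + 1)) := by
      refine ⟨γ (N + 1), ?_⟩
      rintro _ ⟨m, rfl⟩
      exact hγ_mono (N+1) (m.1+1) (by omega) (by omega)
    have hGle : (⨆ m : {m : ℕ // N ≤ m}, γ (m.1 + 1)) ≤ γ (N + 1) :=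
      ciSup_le fun m => hγ_mono (N+1) (m.1+1) (by omega) (by omega)
    have hG1 : (⨆ m : {m : ℕ // N ≤ m}, γ (m.1 + 1)) < 1 :=
      hGle.trans_lt (hγ01 (N+1) (by omega)).2
    have hγG : γ (n+1) ≤ ⨆ m : {m : ℕ // N ≤ m}, γ (m.1 + 1) :=
      le_ciSup hbddG ⟨n, hNn⟩
    have hG0 : 0 ≤ ⨆ m : {m : ℕ // N ≤ m}, γ (m.1 + 1) := le_trans hγn.1 hγG
    have hinvpos : 0 < (1 - ⨆ m : {m : ℕ // N ≤ m}, γ (m.1 + 1))⁻¹ :=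
      inv_pos.2 (by linarith)
    have hfrac : γ (n+1) / (1 - γ (n+1))
        ≤ γ (n+1) * (1 - ⨆ m : {m : ℕ // N ≤ m}, γ (m.1 + 1))⁻¹ := by
      rw [div_eq_mul_inv]
      refine mul_le_mul_of_nonneg_left ?_ hγn.1
      exact inv_anti₀ (by linarith) (by linarith)
    have hgoal : |(∫ y, (q x y * min 1 (piB lam pdf idx (θ n ω) y
          / piB lam pdf idx (θ n ω) x)) * f y ∂lam)
        + (1 - ∫ z, q x z * min 1 (piB lam pdf idx (θ n ω) z
            / piB lam pdf idx (θ n ω) x) ∂lam) * f x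
        - ((∫ y, (q x y * min 1 (piB lam pdf idx (θ (n+1) ω) y
            / piB lam pdf idx (θ (n+1) ω) x)) * f y ∂lam)
          + (1 - ∫ z, q x z * min 1 (piB lam pdf idx (θ (n+1) ω) z
              / piB lam pdf idx (θ (n+1) ω) x) ∂lam) * f x)|
        ≤ 2 * (γ (n+1) / (1 - γ (n+1))) := by
      have he : (∫ y, (q x y * min 1 (piB lam pdf idx (θ n ω) y
            / piB lam pdf idx (θ n ω) x)) * f y ∂lam)
          + (1 - ∫ z, q x z * min 1 (piB lam pdf idx (θ n ω) z
              / piB lam pdf idx (θ n ω) x) ∂lam) * f x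
          - ((∫ y, (q x y * min 1 (piB lam pdf idx (θ (n+1) ω) y
              / piB lam pdf idx (θ (n+1) ω) x)) * f y ∂lam)
            + (1 - ∫ z, q x z * min 1 (piB lam pdf idx (θ (n+1) ω) z
                / piB lam pdf idx (θ (n+1) ω) x) ∂lam) * f x)
          = ((∫ y, (q x y * min 1 (piB lam pdf idx (θ n ω) y
              / piB lam pdf idx (θ n ω) x)) * f y ∂lam)
            - (∫ y, (q x y * min 1 (piB lam pdf idx (θ (n+1) ω) y
                / piB lam pdf idx (θ (n+1) ω) x)) * f y ∂lam))
          + (-(((∫ z, q x z * min 1 (piB lam pdf idx (θ n ω) z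
              / piB lam pdf idx (θ n ω) x) ∂lam)
            - (∫ z, q x z * min 1 (piB lam pdf idx (θ (n+1) ω) z
                / piB lam pdf idx (θ (n+1) ω) x) ∂lam)) * f x)) := by ring
      rw [he]
      calc _ ≤ |(∫ y, (q x y * min 1 (piB lam pdf idx (θ n ω) y
              / piB lam pdf idx (θ n ω) x)) * f y ∂lam)
            - (∫ y, (q x y * min 1 (piB lam pdf idx (θ (n+1) ω) y
                / piB lam pdf idx (θ (n+1) ω) x)) * f y ∂lam)|
          + |(-(((∫ z, q x z * min 1 (piB lam pdf idx (θ n ω) z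
              / piB lam pdf idx (θ n ω) x) ∂lam)
            - (∫ z, q x z * min 1 (piB lam pdf idx (θ (n+1) ω) z
                / piB lam pdf idx (θ (n+1) ω) x) ∂lam)) * f x))| := abs_add_le _ _
        _ ≤ γ (n+1) / (1 - γ (n+1)) + γ (n+1) / (1 - γ (n+1)) := by
            refine add_le_add hA ?_
            rw [abs_neg, abs_mul]
            calc _ ≤ (γ (n+1) / (1 - γ (n+1))) * 1 :=
                mul_le_mul hρ (hf1 x) (abs_nonneg _) (div_nonneg hγn.1 hγpos.le)
              _ = γ (n+1) / (1 - γ (n+1)) := mul_one _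
        _ = 2 * (γ (n+1) / (1 - γ (n+1))) := by ring
    refine hgoal.trans ?_
    calc 2 * (γ (n+1) / (1 - γ (n+1)))
        ≤ 2 * (γ (n+1) * (1 - ⨆ m : {m : ℕ // N ≤ m}, γ (m.1 + 1))⁻¹) := by linarith
      _ ≤ 4 * (1 + (1 - ⨆ m : {m : ℕ // N ≤ m}, γ (m.1 + 1))⁻¹) * γ (n+1) := by
          nlinarith [hγn.1, hinvpos.le]


end
end
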